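/- arXiv:2505.21692 — 7 statements merged into one kernel-verified Lean document; each statement's English description precedes it below -/
import Mathlib

section
/- Let 𝒞 ⊆ ℝ^d be an open convex set and 𝒟 = {q₁,…,q_N} ⊆ ℝ^d. The following are equivalent: (1) there exists a map X̂ : ℝ^N → 𝒫(ℝ^d) such that for every c ∈ 𝒞, X̂(c⊤q₁,…,c⊤q_N) = argmin_{x∈𝒳} c⊤x; (2) there exists a map x̂ : ℝ^N → 𝒳 such that for every c ∈ 𝒞, x̂(c⊤q₁,…,c⊤q_N) ∈ argmin_{x∈𝒳} c⊤x. -/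
open scoped RealInnerProductSpace

noncomputable section

abbrev Vec (d : ℕ) := EuclideanSpace ℝ (Fin d)

/-- The feasible set 𝒳 = {x : Ax = b, x ≥ 0}. -/
def feasibleSet {d m : ℕ} (A : Matrix (Fin m) (Fin d) ℝ) (b : Fin m → ℝ) : Set (Vec d) :=
  {x | A.mulVec x = b ∧ ∀ i, 0 ≤ x i}

/-- argmin_{x ∈ X} c⊤x. -/
def argminSet {d : ℕ} (X : Set (Vec d)) (c : Vec d) : Set (Vec d) :=
  {x | x ∈ X ∧ ∀ y ∈ X, ⟪c, x⟫ ≤ ⟪c, y⟫}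

/-- 𝒟 = {q 1, …, q N} is a sufficient decision dataset for 𝒞 and 𝒳. -/
def SufficientDataset {d N : ℕ} (C : Set (Vec d)) (X : Set (Vec d)) (q : Fin N → Vec d) : Prop :=
  ∃ Xhat : (Fin N → ℝ) → Set (Vec d),
    ∀ c ∈ C, Xhat (fun i => ⟪c, q i⟫) = argminSet X c

/-- Extreme points of X. -/
def extremePts {d : ℕ} (X : Set (Vec d)) : Set (Vec d) :=
  {x | x ∈ X ∧ ¬ ∃ (l : ℝ) (y z : Vec d), y ∈ X ∧ z ∈ X ∧ y ≠ z ∧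
    l ∈ Set.Ioo (0:ℝ) 1 ∧ x = l • y + (1 - l) • z}

/-- Feasible directions from x in X. -/
def FD {d : ℕ} (X : Set (Vec d)) (x : Vec d) : Set (Vec d) :=
  {δ | ∃ ε : ℝ, 0 < ε ∧ x + ε • δ ∈ X}

/-- Extreme directions of FD(x). -/
def extremeDirs {d : ℕ} (X : Set (Vec d)) (x : Vec d) : Set (Vec d) :=
  {δ | δ ∈ FD X x ∧ δ ≠ 0 ∧ ¬ ∃ (l : ℝ) (δ₁ δ₂ : Vec d), δ₁ ∈ FD X x ∧ δ₂ ∈ FD X x ∧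
    (∀ t : ℝ, δ₁ ≠ t • δ₂) ∧ l ∈ Set.Ioo (0:ℝ) 1 ∧ δ = l • δ₁ + (1 - l) • δ₂}

/-- Optimality cone Λ(x). -/
def Lam {d : ℕ} (X : Set (Vec d)) (x : Vec d) : Set (Vec d) :=
  {c | x ∈ argminSet X c}

/-- The face F(x, δ) = Λ(x) ∩ {δ}^⊥. -/
def faceF {d : ℕ} (X : Set (Vec d)) (x δ : Vec d) : Set (Vec d) :=
  Lam X x ∩ {c | ⟪c, δ⟫ = 0}

/-- Relevant extreme directions Δ(𝒳, 𝒞). -/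
def DeltaSet {d : ℕ} (X C : Set (Vec d)) : Set (Vec d) :=
  {δ | ∃ x ∈ extremePts X, δ ∈ extremeDirs X x ∧ (faceF X x δ ∩ C).Nonempty}

/-- F₀: the span of the canonical basis vectors eᵢ with xᵢ ≠ 0 for some x ∈ X. -/
def F0 {d : ℕ} (X : Set (Vec d)) : Submodule ℝ (Vec d) :=
  Submodule.span ℝ {v | ∃ i : Fin d, (∃ x ∈ X, x i ≠ 0) ∧ v = EuclideanSpace.single i 1}

/-- Ker A as a submodule of ℝ^d. -/
def kerA {d m : ℕ} (A : Matrix (Fin m) (Fin d) ℝ) : Submodule ℝ (Vec d) :=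
  LinearMap.ker ((Matrix.mulVecLin A).comp (WithLp.linearEquiv 2 ℝ (Fin d → ℝ)).toLinearMap)

/-- Reachable optimal solutions 𝒳*(𝒞). -/
def reachable {d : ℕ} (X C : Set (Vec d)) : Set (Vec d) := ⋃ c ∈ C, argminSet X c

/-- dir(𝒳*(𝒞)) = span of differences of reachable solutions. -/
def dirSpan {d : ℕ} (X C : Set (Vec d)) : Submodule ℝ (Vec d) :=
  Submodule.span ℝ {v | ∃ x₁ ∈ reachable X C, ∃ x₂ ∈ reachable X C, v = x₁ - x₂}

/-- 𝒞-strong neighbors. -/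
def StrongNeighbors {d : ℕ} (X C : Set (Vec d)) (x₁ x₂ : Vec d) : Prop :=
  x₂ - x₁ ∈ extremeDirs X x₁ ∧ ∃ c ∈ C, x₁ ∈ argminSet X c ∧ x₂ ∈ argminSet X c

/-- Y is 𝒞-strongly connected by neighboring extreme points. -/
def StronglyConnected {d : ℕ} (X C Y : Set (Vec d)) : Prop :=
  ∀ x ∈ Y, ∀ x' ∈ Y, ∃ (h : ℕ) (seq : Fin (h + 1) → Vec d),
    (∀ i, seq i ∈ Y) ∧ seq 0 = x ∧ seq (Fin.last h) = x' ∧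
    ∀ i : Fin h, StrongNeighbors X C (seq i.castSucc) (seq i.succ)

/-! If a point selector `x̂` is optimal on the open set `𝒞` and `c, c' ∈ 𝒞` have the same data
`(c⊤qᵢ)ᵢ`, then so does the extrapolated cost `c + ε (c - c') ∈ 𝒞` for small `ε > 0`, and the single
point `x̂` is optimal for all three costs. For `x` optimal for `c` we have `c⊤x = c⊤x̂`, and
optimality of `x̂` for the extrapolated cost turns this into `c'⊤x ≤ c'⊤x̂`, so `x` is optimal for
`c'`. Hence the argmin set is a function of the data. Conversely, the feasible set is compact, so
every argmin set is nonempty and choosing a point of it gives `x̂`. -/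

open Filter Topology

lemma IsOpen.exists_pos_add_smul_mem {E : Type*} [AddCommGroup E] [Module ℝ E]
    [TopologicalSpace E] [ContinuousAdd E] [ContinuousSMul ℝ E] {U : Set E} (hU : IsOpen U)
    {x : E} (hx : x ∈ U) (v : E) : ∃ ε : ℝ, 0 < ε ∧ x + ε • v ∈ U := by
  have hcont : Continuous fun t : ℝ => x + t • v := by fun_prop
  have hnear : ∀ᶠ t in 𝓝[>] (0 : ℝ), x + t • v ∈ U :=
    nhdsWithin_le_nhds (hcont.continuousAt.preimage_mem_nhds (by simpa using hU.mem_nhds hx))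
  obtain ⟨ε, hεU, hε⟩ := (hnear.and self_mem_nhdsWithin).exists
  exact ⟨ε, hε, hεU⟩

lemma isClosed_feasibleSet {d m : ℕ} (A : Matrix (Fin m) (Fin d) ℝ) (b : Fin m → ℝ) :
    IsClosed (feasibleSet A b) := by
  have hA : Continuous fun x : Vec d => A.mulVec x :=
    (A.mulVecLin.comp (WithLp.linearEquiv 2 ℝ (Fin d → ℝ)).toLinearMap)
      |>.continuous_of_finiteDimensional
  have hpos : IsClosed {x : Vec d | ∀ i, 0 ≤ x i} := by
    simp only [Set.ofPred_forall]
    exact isClosed_iInter fun i => isClosed_le continuous_const (EuclideanSpace.proj i).continuous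
  exact (isClosed_eq hA continuous_const).inter hpos

lemma IsCompact.argminSet_nonempty {d : ℕ} {X : Set (Vec d)} (hX : IsCompact X)
    (hne : X.Nonempty) (c : Vec d) : (argminSet X c).Nonempty := by
  obtain ⟨x, hx, hmin⟩ :=
    hX.exists_isMinOn hne (continuous_const.inner (𝕜 := ℝ) continuous_id).continuousOn
  exact ⟨x, hx, fun y hy => hmin hy⟩

lemma argminSet_subset_of_mem_argminSet {d : ℕ} {X : Set (Vec d)} {c c' xs : Vec d} {ε : ℝ}
    (hε : 0 < ε) (hc : xs ∈ argminSet X c) (hc' : xs ∈ argminSet X c')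
    (hext : xs ∈ argminSet X (c + ε • (c - c'))) : argminSet X c ⊆ argminSet X c' := by
  rintro x ⟨hxX, hx⟩
  have hcx : ⟪c, x⟫ = ⟪c, xs⟫ := le_antisymm (hx xs hc.1) (hc.2 x hxX)
  have hext_x := hext.2 x hxX
  simp only [inner_add_left, real_inner_smul_left, inner_sub_left] at hext_x
  have hc'x : ⟪c', x⟫ ≤ ⟪c', xs⟫ := by nlinarith
  exact ⟨hxX, fun y hy => hc'x.trans (hc'.2 y hy)⟩

lemma argminSet_subset_of_inner_eq {d N : ℕ} {X C : Set (Vec d)} (hC : IsOpen C)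
    {q : Fin N → Vec d} {xhat : (Fin N → ℝ) → Vec d}
    (hxhat : ∀ c ∈ C, xhat (fun i => ⟪c, q i⟫) ∈ argminSet X c) {c c' : Vec d}
    (hc : c ∈ C) (hc' : c' ∈ C) (hdata : (fun i => ⟪c, q i⟫) = fun i => ⟪c', q i⟫) :
    argminSet X c ⊆ argminSet X c' := by
  obtain ⟨ε, hε, hεC⟩ := hC.exists_pos_add_smul_mem hc (c - c')
  have hdata_ext : (fun i => ⟪c + ε • (c - c'), q i⟫) = fun i => ⟪c, q i⟫ := by
    funext i
    simp only [inner_add_left, real_inner_smul_left, inner_sub_left, congrFun hdata i]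
    ring
  refine argminSet_subset_of_mem_argminSet hε (hxhat c hc) ?_ ?_
  · simpa only [hdata] using hxhat c' hc'
  · simpa only [hdata_ext] using hxhat _ hεC

theorem stmt1_general {d m N : ℕ} (A : Matrix (Fin m) (Fin d) ℝ) (b : Fin m → ℝ)
    (hne : (feasibleSet A b).Nonempty) (hbdd : Bornology.IsBounded (feasibleSet A b))
    (C : Set (Vec d)) (hCopen : IsOpen C)
    (q : Fin N → Vec d) :
    (∃ Xhat : (Fin N → ℝ) → Set (Vec d),
        ∀ c ∈ C, Xhat (fun i => ⟪c, q i⟫) = argminSet (feasibleSet A b) c) ↔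
    (∃ xhat : (Fin N → ℝ) → Vec d, (∀ o, xhat o ∈ feasibleSet A b) ∧
        ∀ c ∈ C, xhat (fun i => ⟪c, q i⟫) ∈ argminSet (feasibleSet A b) c) := by
  set X := feasibleSet A b
  constructor
  · rintro ⟨Xhat, hXhat⟩
    have hcpt : IsCompact X :=
      Metric.isCompact_of_isClosed_isBounded (isClosed_feasibleSet A b) hbdd
    classical
    refine ⟨fun o => if h : (Xhat o ∩ X).Nonempty then h.some else hne.some, fun o => ?_,
      fun c hc => ?_⟩
    · dsimp only
      split_ifs with h
      exacts [h.some_mem.2, hne.some_mem]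
    · obtain ⟨x, hx⟩ := hcpt.argminSet_nonempty hne c
      have h : (Xhat (fun i => ⟪c, q i⟫) ∩ X).Nonempty := ⟨x, (hXhat c hc).symm ▸ hx, hx.1⟩
      dsimp only
      rw [dif_pos h, ← hXhat c hc]
      exact h.some_mem.1
  · rintro ⟨xhat, -, hxhat⟩
    let data : Vec d → Fin N → ℝ := fun c i => ⟪c, q i⟫
    refine ⟨fun o => argminSet X (Function.invFunOn data C o), fun c hc => ?_⟩
    have hex : ∃ c' ∈ C, data c' = data c := ⟨c, hc, rfl⟩
    have hmem := Function.invFunOn_mem hex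
    have hdata := Function.invFunOn_eq hex
    exact (argminSet_subset_of_inner_eq hCopen hxhat hmem hc hdata).antisymm
      (argminSet_subset_of_inner_eq hCopen hxhat hc hmem hdata.symm)

/-- for an open convex uncertainty set, recovering the whole argmin set
is equivalent to recovering a single optimal solution. -/
theorem stmt1 {d m N : ℕ} (A : Matrix (Fin m) (Fin d) ℝ) (b : Fin m → ℝ)
    (hne : (feasibleSet A b).Nonempty) (hbdd : Bornology.IsBounded (feasibleSet A b))
    (C : Set (Vec d)) (hCopen : IsOpen C) (hCconv : Convex ℝ C)
    (q : Fin N → Vec d) :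
    (∃ Xhat : (Fin N → ℝ) → Set (Vec d),
        ∀ c ∈ C, Xhat (fun i => ⟪c, q i⟫) = argminSet (feasibleSet A b) c) ↔
    (∃ xhat : (Fin N → ℝ) → Vec d, (∀ o, xhat o ∈ feasibleSet A b) ∧
        ∀ c ∈ C, xhat (fun i => ⟪c, q i⟫) ∈ argminSet (feasibleSet A b) c) :=
  stmt1_general A b hne hbdd C hCopen q
end
end

section
/- Assume 𝒞 ⊆ ℝ^d is open and 𝒟 is a sufficient decision dataset for 𝒞 and 𝒳, and let c ∈ 𝒞. Then there exists μ > 0 such that every c' ∈ 𝒞 whose orthogonal projection onto span 𝒟 lies at Euclidean distance less than μ from the orthogonal projection of c onto span 𝒟 satisfies argmin_{x∈𝒳} c'⊤x ⊆ argmin_{x∈𝒳} c⊤x. -/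
open scoped RealInnerProductSpace

noncomputable section

section Aux

variable {d m : ℕ} (A : Matrix (Fin m) (Fin d) ℝ) (b : Fin m → ℝ)

lemma feasible_mulVec_eq (x : Vec d) :
    A.mulVec x = (Matrix.mulVecLin A).comp
      (WithLp.linearEquiv 2 ℝ (Fin d → ℝ)).toLinearMap x := rfl

lemma feasible_isClosed : IsClosed (feasibleSet A b) := by
  have h1 : IsClosed {x : Vec d | A.mulVec x = b} := by
    have hc : Continuous fun x : Vec d => A.mulVec x :=
      ((Matrix.mulVecLin A).comp
        (WithLp.linearEquiv 2 ℝ (Fin d → ℝ)).toLinearMap).continuous_of_finiteDimensional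
    exact isClosed_eq hc continuous_const
  have h2 : IsClosed {x : Vec d | ∀ i, 0 ≤ x i} := by
    have : {x : Vec d | ∀ i, 0 ≤ x i} = ⋂ i, {x : Vec d | 0 ≤ x i} := by
      ext x; simp
    rw [this]
    refine isClosed_iInter fun i => ?_
    have hci : Continuous fun x : Vec d => x i :=
      ((LinearMap.proj i).comp
        (WithLp.linearEquiv 2 ℝ (Fin d → ℝ)).toLinearMap).continuous_of_finiteDimensional
    exact isClosed_le continuous_const hci
  have : feasibleSet A b = {x : Vec d | A.mulVec x = b} ∩ {x : Vec d | ∀ i, 0 ≤ x i} := rfl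
  rw [this]; exact h1.inter h2

lemma feasible_convex : Convex ℝ (feasibleSet A b) := by
  intro x hx y hy a bb ha hb hab
  constructor
  · have : A.mulVec (a • x + bb • y : Vec d) = a • A.mulVec x + bb • A.mulVec y := by
      rw [feasible_mulVec_eq A (a • x + bb • y), map_add, map_smul, map_smul]; rfl
    rw [this, hx.1, hy.1, ← add_smul, hab, one_smul]
  · intro i
    have : (a • x + bb • y) i = a * x i + bb * y i := rfl
    rw [this]
    have := hx.2 i; have := hy.2 i
    positivity

end Aux

section Extreme

variable {d m : ℕ} {A : Matrix (Fin m) (Fin d) ℝ} {b : Fin m → ℝ}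

lemma extreme_indep {x : Vec d} (hx : x ∈ (feasibleSet A b).extremePoints ℝ)
    (w : Vec d) (hw : A.mulVec w = 0) (hsupp : ∀ i, x i = 0 → w i = 0) : w = 0 := by
  by_contra hw0
  -- choose a small ε > 0
  set T : Finset ℝ :=
    insert 1 ((Finset.univ : Finset (Fin d)).image
      fun i => if x i = 0 then (1:ℝ) else x i / (|w i| + 1)) with hT
  have hTne : T.Nonempty := ⟨1, Finset.mem_insert_self _ _⟩
  set ε : ℝ := T.min' hTne with hε
  have hxX := hx.1
  have hεpos : 0 < ε := by
    rw [hε, Finset.lt_min'_iff]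
    intro y hy
    rcases Finset.mem_insert.mp hy with h | h
    · simp [h]
    · obtain ⟨i, _, rfl⟩ := Finset.mem_image.mp h
      by_cases hxi : x i = 0
      · simp [hxi]
      · have : 0 < x i := lt_of_le_of_ne (hxX.2 i) (Ne.symm hxi)
        have : 0 < |w i| + 1 := by positivity
        simp only [if_neg hxi]
        positivity
  have hεle : ∀ i, x i ≠ 0 → ε * (|w i| + 1) ≤ x i := by
    intro i hxi
    have hmem : (x i / (|w i| + 1)) ∈ T := by
      refine Finset.mem_insert_of_mem (Finset.mem_image.mpr ⟨i, Finset.mem_univ i, ?_⟩)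
      simp [hxi]
    have h1 : ε ≤ x i / (|w i| + 1) := Finset.min'_le _ _ hmem
    have h2 : 0 < |w i| + 1 := by positivity
    calc ε * (|w i| + 1) ≤ (x i / (|w i| + 1)) * (|w i| + 1) := by
          exact mul_le_mul_of_nonneg_right h1 h2.le
      _ = x i := by field_simp
  have habs : ∀ i, |ε * w i| ≤ x i := by
    intro i
    by_cases hxi : x i = 0
    · simp [hxi, hsupp i hxi]
    · have h1 := hεle i hxi
      have h2 : |ε * w i| = ε * |w i| := by rw [abs_mul, abs_of_pos hεpos]
      nlinarith [abs_nonneg (w i)]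
  -- the two perturbed points
  have hmem : ∀ s : ℝ, |s| = 1 → x + (s * ε) • w ∈ feasibleSet A b := by
    intro s hs
    constructor
    · have : A.mulVec (x + (s * ε) • w : Vec d) = A.mulVec x + (s * ε) • A.mulVec w := by
        rw [feasible_mulVec_eq A (x + (s * ε) • w), map_add, map_smul]; rfl
      rw [this, hw, hxX.1, smul_zero, add_zero]
    · intro i
      have hco : (x + (s * ε) • w) i = x i + s * (ε * w i) := by
        show x i + (s * ε) * w i = _; ring
      rw [hco]
      have h1 := habs i
      have h2 : |s * (ε * w i)| = |ε * w i| := by rw [abs_mul, hs, one_mul]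
      nlinarith [neg_abs_le (s * (ε * w i)), abs_nonneg (ε * w i)]
  have hp := hmem 1 (by norm_num)
  have hn := hmem (-1) (by norm_num)
  simp only [one_mul, neg_one_mul, neg_smul] at hp hn
  have hseg : x ∈ openSegment ℝ (x + ε • w) (x - ε • w) := by
    refine ⟨1/2, 1/2, by norm_num, by norm_num, by norm_num, ?_⟩
    module
  have := (mem_extremePoints.mp hx).2 _ hp _ (by simpa [sub_eq_add_neg] using hn) hseg
  have h0 : ε • w = 0 := by
    have h := this.1
    have : x + ε • w - x = 0 := by rw [h]; simp
    simpa using this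
  exact hw0 (by simpa [hεpos.ne'] using h0)

lemma extreme_finite : ((feasibleSet A b).extremePoints ℝ).Finite := by
  have hinj : Set.InjOn (fun x : Vec d => {i : Fin d | x i ≠ 0})
      ((feasibleSet A b).extremePoints ℝ) := by
    intro x hx y hy hxy
    have hsub : A.mulVec (x - y : Vec d) = 0 := by
      rw [feasible_mulVec_eq A (x - y), map_sub]
      have h1 := hx.1.1; have h2 := hy.1.1
      rw [feasible_mulVec_eq] at h1 h2
      rw [h1, h2, sub_self]
    have hs : ∀ i, x i = 0 → (x - y) i = 0 := by
      intro i hi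
      simp only at hxy
      have : i ∉ {i : Fin d | x i ≠ 0} := by simp [hi]
      rw [hxy] at this
      have hyi : y i = 0 := by simpa using this
      show x i - y i = 0
      rw [hi, hyi, sub_self]
    have := extreme_indep hx (x - y) hsub hs
    exact sub_eq_zero.mp this
  exact Set.Finite.of_finite_image (Set.toFinite _) hinj

end Extreme

lemma argmin_stable {d m : ℕ} (A : Matrix (Fin m) (Fin d) ℝ) (b : Fin m → ℝ)
    (hne : (feasibleSet A b).Nonempty) (hbdd : Bornology.IsBounded (feasibleSet A b))
    (c : Vec d) :
    ∃ μ > (0:ℝ), ∀ c' : Vec d, ‖c' - c‖ < μ →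
      argminSet (feasibleSet A b) c' ⊆ argminSet (feasibleSet A b) c := by
  set X := feasibleSet A b with hX
  have hXc : IsCompact X := Metric.isCompact_of_isClosed_isBounded (feasible_isClosed A b) hbdd
  have hconv : Convex ℝ X := feasible_convex A b
  -- minimizer of c over X
  have hcont : Continuous fun x : Vec d => ⟪c, x⟫ := continuous_const.inner continuous_id
  obtain ⟨xs, hxsX, hxs⟩ := hXc.exists_isMinOn hne hcont.continuousOn
  have hxsmin : ∀ y ∈ X, ⟪c, xs⟫ ≤ ⟪c, y⟫ := fun y hy => hxs hy
  set m0 : ℝ := ⟪c, xs⟫ with hm0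
  -- extreme points
  have hE : (X.extremePoints ℝ).Finite := extreme_finite
  have hEX : X.extremePoints ℝ ⊆ X := extremePoints_subset
  have hhull : convexHull ℝ (X.extremePoints ℝ) = X := by
    have h1 := closure_convexHull_extremePoints hXc hconv
    rwa [(hE.isCompact_convexHull ℝ).isClosed.closure_eq] at h1
  set Ef : Finset (Vec d) := hE.toFinset with hEf
  -- gap γ
  set G : Finset ℝ :=
    insert 1 ((Ef.filter (fun e => m0 < ⟪c, e⟫)).image fun e => ⟪c, e⟫ - m0) with hG
  have hGne : G.Nonempty := ⟨1, Finset.mem_insert_self _ _⟩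
  set γ : ℝ := G.min' hGne with hγ
  have hγpos : 0 < γ := by
    rw [hγ, Finset.lt_min'_iff]
    intro y hy
    rcases Finset.mem_insert.mp hy with h | h
    · simp [h]
    · obtain ⟨e, he, rfl⟩ := Finset.mem_image.mp h
      have := (Finset.mem_filter.mp he).2
      linarith
  -- bound M
  obtain ⟨M, hM⟩ := hbdd.exists_norm_le
  set M' : ℝ := max M 1 with hM'
  have hM'pos : 0 < M' := lt_of_lt_of_le one_pos (le_max_right _ _)
  have hMX : ∀ x ∈ X, ‖x‖ ≤ M' := fun x hx => (hM x hx).trans (le_max_left _ _)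
  refine ⟨γ / (2 * M' + 1), by positivity, ?_⟩
  intro c' hc' x' hx'
  have hx'X : x' ∈ X := hx'.1
  have hx'min : ∀ y ∈ X, ⟪c', x'⟫ ≤ ⟪c', y⟫ := hx'.2
  -- convex combination representation
  have hx'hull : x' ∈ convexHull ℝ (↑Ef : Set (Vec d)) := by
    rw [hEf, hE.coe_toFinset, hhull]; exact hx'X
  rw [Finset.convexHull_eq] at hx'hull
  obtain ⟨w, hw0, hw1, hwx⟩ := hx'hull
  rw [Finset.centerMass_eq_of_sum_1 _ _ hw1] at hwx
  simp only [id] at hwx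
  have hEfX : ∀ e ∈ Ef, e ∈ X := by
    intro e he; exact hEX (hE.mem_toFinset.mp he)
  -- each active vertex is optimal for c'
  have hsum : ∑ e ∈ Ef, w e * (⟪c', e⟫ - ⟪c', x'⟫) = 0 := by
    have h1 : ⟪c', x'⟫ = ∑ e ∈ Ef, w e * ⟪c', e⟫ := by
      rw [← hwx, inner_sum]
      exact Finset.sum_congr rfl fun e _ => real_inner_smul_right c' e (w e)
    have h2 : ∑ e ∈ Ef, w e * ⟪c', x'⟫ = ⟪c', x'⟫ := by
      rw [← Finset.sum_mul, hw1, one_mul]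
    calc ∑ e ∈ Ef, w e * (⟪c', e⟫ - ⟪c', x'⟫)
        = ∑ e ∈ Ef, w e * ⟪c', e⟫ - ∑ e ∈ Ef, w e * ⟪c', x'⟫ := by
          rw [← Finset.sum_sub_distrib]; exact Finset.sum_congr rfl fun e _ => by ring
      _ = 0 := by rw [← h1, h2, sub_self]
  have hterm : ∀ e ∈ Ef, w e * (⟪c', e⟫ - ⟪c', x'⟫) = 0 := by
    have hnn : ∀ e ∈ Ef, 0 ≤ w e * (⟪c', e⟫ - ⟪c', x'⟫) := by
      intro e he
      have h1 := hx'min e (hEfX e he)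
      have h2 := hw0 e he
      nlinarith
    exact (Finset.sum_eq_zero_iff_of_nonneg hnn).mp hsum
  -- active vertices are optimal for c
  have hopt : ∀ e ∈ Ef, w e ≠ 0 → ⟪c, e⟫ = m0 := by
    intro e he hwe
    have heX := hEfX e he
    have hge : m0 ≤ ⟪c, e⟫ := hxsmin e heX
    by_contra hne2
    have hlt : m0 < ⟪c, e⟫ := lt_of_le_of_ne hge (Ne.symm hne2)
    have hgap : γ ≤ ⟪c, e⟫ - m0 := by
      refine Finset.min'_le _ _ ?_
      exact Finset.mem_insert_of_mem (Finset.mem_image.mpr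
        ⟨e, Finset.mem_filter.mpr ⟨he, hlt⟩, rfl⟩)
    -- estimate
    have hce' : ⟪c', e⟫ = ⟪c', x'⟫ := by
      have := hterm e he
      rcases mul_eq_zero.mp this with h | h
      · exact absurd h hwe
      · linarith
    have h1 : ⟪c', e⟫ ≤ ⟪c', xs⟫ := hce' ▸ hx'min xs hxsX
    have h2 : ⟪c, e⟫ = ⟪c', e⟫ + ⟪c - c', e⟫ := by
      rw [← inner_add_left]; norm_num
    have h3 : ⟪c', xs⟫ = m0 + ⟪c' - c, xs⟫ := by
      rw [hm0, ← inner_add_left]; norm_num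
    have h4 : ⟪c - c', e⟫ ≤ ‖c' - c‖ * ‖e‖ := by
      calc ⟪c - c', e⟫ ≤ ‖c - c'‖ * ‖e‖ := real_inner_le_norm _ _
        _ = ‖c' - c‖ * ‖e‖ := by rw [norm_sub_rev]
    have h5 : ⟪c' - c, xs⟫ ≤ ‖c' - c‖ * ‖xs‖ := real_inner_le_norm _ _
    have hne' : ‖e‖ ≤ M' := hMX e heX
    have hnxs : ‖xs‖ ≤ M' := hMX xs hxsX
    have hnn : (0:ℝ) ≤ ‖c' - c‖ := norm_nonneg _
    have h6 : ‖c' - c‖ * (2 * M' + 1) < γ := by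
      rw [← lt_div_iff₀ (by positivity)]; exact hc'
    nlinarith [mul_le_mul_of_nonneg_left hne' hnn, mul_le_mul_of_nonneg_left hnxs hnn]
  -- conclude
  have hfin : ⟪c, x'⟫ = m0 := by
    have h1 : ⟪c, x'⟫ = ∑ e ∈ Ef, w e * ⟪c, e⟫ := by
      rw [← hwx, inner_sum]
      exact Finset.sum_congr rfl fun e _ => real_inner_smul_right c e (w e)
    have h2 : ∑ e ∈ Ef, w e * ⟪c, e⟫ = ∑ e ∈ Ef, w e * m0 := by
      refine Finset.sum_congr rfl fun e he => ?_
      by_cases hwe : w e = 0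
      · rw [hwe, zero_mul, zero_mul]
      · rw [hopt e he hwe]
    rw [h1, h2, ← Finset.sum_mul, hw1, one_mul]
  exact ⟨hx'X, fun y hy => by rw [hfin]; exact hxsmin y hy⟩


/-- for a sufficient dataset and c ∈ 𝒞, any c' ∈ 𝒞 whose projection
onto span 𝒟 is close enough to that of c has argmin contained in that of c. -/
theorem stmt3 {d m N : ℕ} (A : Matrix (Fin m) (Fin d) ℝ) (b : Fin m → ℝ)
    (hne : (feasibleSet A b).Nonempty) (hbdd : Bornology.IsBounded (feasibleSet A b))
    (C : Set (Vec d)) (hCopen : IsOpen C)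
    (q : Fin N → Vec d) (hsuff : SufficientDataset C (feasibleSet A b) q)
    (c : Vec d) (hc : c ∈ C) :
    ∃ μ > (0:ℝ), ∀ c' ∈ C,
      ‖((Submodule.orthogonalProjectionOnto (Submodule.span ℝ (Set.range q)) c' : Vec d) -
        (Submodule.orthogonalProjectionOnto (Submodule.span ℝ (Set.range q)) c : Vec d))‖ < μ →
      argminSet (feasibleSet A b) c' ⊆ argminSet (feasibleSet A b) c := by
  
  set S : Submodule ℝ (Vec d) := Submodule.span ℝ (Set.range q) with hS
  obtain ⟨Xhat, hXhat⟩ := hsuff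
  -- equal projections give equal argmins within C
  have key : ∀ c₁ ∈ C, ∀ c₂ ∈ C,
      (S.orthogonalProjectionOnto c₁ : Vec d) = (S.orthogonalProjectionOnto c₂ : Vec d) →
      argminSet (feasibleSet A b) c₁ = argminSet (feasibleSet A b) c₂ := by
    intro c₁ h₁ c₂ h₂ hP
    have hfun : (fun i => ⟪c₁, q i⟫) = fun i => ⟪c₂, q i⟫ := by
      funext i
      have hq : q i ∈ S := Submodule.subset_span (Set.mem_range_self i)
      have e1 : ⟪c₁ - (S.orthogonalProjectionOnto c₁ : Vec d), q i⟫ = 0 :=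
        (Submodule.mem_orthogonal' S _).mp (Submodule.sub_starProjection_mem_orthogonal (K := S) c₁) _ hq
      have e2 : ⟪c₂ - (S.orthogonalProjectionOnto c₂ : Vec d), q i⟫ = 0 :=
        (Submodule.mem_orthogonal' S _).mp (Submodule.sub_starProjection_mem_orthogonal (K := S) c₂) _ hq
      rw [inner_sub_left] at e1 e2
      rw [hP] at e1
      linarith
    rw [← hXhat c₁ h₁, ← hXhat c₂ h₂, hfun]
  obtain ⟨ε, hεpos, hball⟩ := Metric.isOpen_iff.mp hCopen c hc
  obtain ⟨μ₀, hμ₀pos, hstab⟩ := argmin_stable A b hne hbdd c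
  refine ⟨min μ₀ ε, lt_min hμ₀pos hεpos, ?_⟩
  intro c' hc'C hclose
  set v : Vec d := (S.orthogonalProjectionOnto c' : Vec d) - (S.orthogonalProjectionOnto c : Vec d)
    with hv
  set c'' : Vec d := c + v with hc''
  have hnormv : ‖c'' - c‖ = ‖v‖ := by rw [hc'', add_sub_cancel_left]
  have hc''C : c'' ∈ C := by
    apply hball
    rw [Metric.mem_ball, dist_eq_norm, hnormv]
    exact hclose.trans_le (min_le_right _ _)
  have hPv : (S.orthogonalProjectionOnto v : Vec d) = v := by
    have hvS : v ∈ S := sub_mem (S.orthogonalProjectionOnto c').2 (S.orthogonalProjectionOnto c).2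
    have := Submodule.orthogonalProjectionOnto_mem_subspace_eq_self (K := S) ⟨v, hvS⟩
    simpa using congrArg (Subtype.val) this
  have hPc'' : (S.orthogonalProjectionOnto c'' : Vec d) = (S.orthogonalProjectionOnto c' : Vec d) := by
    have : S.orthogonalProjectionOnto c'' = S.orthogonalProjectionOnto c + S.orthogonalProjectionOnto v := by
      rw [hc'', map_add]
    have hcoe : (S.orthogonalProjectionOnto c'' : Vec d)
        = (S.orthogonalProjectionOnto c : Vec d) + (S.orthogonalProjectionOnto v : Vec d) := by
      rw [this]; rfl
    rw [hcoe, hPv, hv]; abel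
  have heq : argminSet (feasibleSet A b) c'' = argminSet (feasibleSet A b) c' :=
    key c'' hc''C c' hc'C hPc''
  have hsub : argminSet (feasibleSet A b) c'' ⊆ argminSet (feasibleSet A b) c := by
    apply hstab
    rw [hnormv]
    exact hclose.trans_le (min_le_left _ _)
  rw [← heq]
  exact hsub
end
end

section
/- Suppose the uncertainty set is 𝒞 = ℝ^d. A dataset 𝒟 = {q₁,…,q_N} ⊆ ℝ^d is a sufficient decision dataset for 𝒞 = ℝ^d and 𝒳 if and only if F₀ ∩ Ker A ⊆ span 𝒟. -/
open scoped RealInnerProductSpace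

noncomputable section

section StmtFourProof

variable {d m N : ℕ}

private lemma vec_eq_sum' (x : Vec d) : x = ∑ i, x i • EuclideanSpace.single i (1:ℝ) := by
  have h := (EuclideanSpace.basisFun (Fin d) ℝ).sum_repr x
  simp only [EuclideanSpace.basisFun_apply, EuclideanSpace.basisFun_repr] at h
  exact h.symm

private lemma mem_F0' {X : Set (Vec d)} {x : Vec d} (hx : x ∈ X) : x ∈ F0 X := by
  rw [vec_eq_sum' x]
  refine Submodule.sum_mem _ (fun i _ => ?_)
  by_cases h : x i = 0
  · simp [h]
  · exact Submodule.smul_mem _ _ (Submodule.subset_span ⟨i, ⟨x, hx, h⟩, rfl⟩)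

private lemma apply_sum' {n : ℕ} (f : Fin n → Vec d) (j : Fin d) :
    (∑ i, f i) j = ∑ i, f i j := by
  exact map_sum (EuclideanSpace.proj j : Vec d →L[ℝ] ℝ) f Finset.univ

private lemma suff_iff' {X : Set (Vec d)} {q : Fin N → Vec d} :
    SufficientDataset Set.univ X q ↔
    ∀ c c' : Vec d, (∀ i, ⟪c, q i⟫ = ⟪c', q i⟫) → argminSet X c = argminSet X c' := by
  constructor
  · rintro ⟨Xh, hXh⟩ c c' h
    have hfe : (fun i => ⟪c, q i⟫) = fun i => ⟪c', q i⟫ := funext h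
    rw [← hXh c (Set.mem_univ c), ← hXh c' (Set.mem_univ c'), hfe]
  · intro h
    classical
    refine ⟨fun f => if hf : ∃ c : Vec d, (fun i => ⟪c, q i⟫) = f then
      argminSet X hf.choose else ∅, ?_⟩
    intro c _
    have hf : ∃ c' : Vec d, (fun i => ⟪c', q i⟫) = fun i => ⟪c, q i⟫ := ⟨c, rfl⟩
    dsimp only
    rw [dif_pos hf]
    exact h _ _ (fun i => congrFun hf.choose_spec i)

end StmtFourProof

/-- with no prior knowledge (𝒞 = ℝ^d), 𝒟 is sufficient iff
F₀ ∩ Ker A ⊆ span 𝒟. -/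
theorem stmt4 {d m N : ℕ} (A : Matrix (Fin m) (Fin d) ℝ) (b : Fin m → ℝ)
    (hne : (feasibleSet A b).Nonempty) (hbdd : Bornology.IsBounded (feasibleSet A b))
    (q : Fin N → Vec d) :
    SufficientDataset Set.univ (feasibleSet A b) q ↔
      F0 (feasibleSet A b) ⊓ kerA A ≤ Submodule.span ℝ (Set.range q) := by
  classical
  set X := feasibleSet A b with hX
  set L : Vec d →ₗ[ℝ] (Fin m → ℝ) :=
    (Matrix.mulVecLin A).comp (WithLp.linearEquiv 2 ℝ (Fin d → ℝ)).toLinearMap with hL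
  have hLdef : ∀ x : Vec d, L x = A.mulVec x := fun _ => rfl
  have hker : ∀ {x y : Vec d}, x ∈ X → y ∈ X → x - y ∈ kerA A := by
    intro x y hx hy
    have : L (x - y) = 0 := by
      rw [map_sub, hLdef, hLdef, hx.1, hy.1, sub_self]
    exact this
  have hdiff : ∀ {x y : Vec d}, x ∈ X → y ∈ X → x - y ∈ F0 X ⊓ kerA A := by
    intro x y hx hy
    exact ⟨Submodule.sub_mem _ (mem_F0' hx) (mem_F0' hy), hker hx hy⟩
  rw [suff_iff']
  constructor
  · -- sufficiency → span inclusion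
    intro h v hv
    obtain ⟨hvF, hvK⟩ := hv
    rw [← Submodule.orthogonal_orthogonal (Submodule.span ℝ (Set.range q)),
      Submodule.mem_orthogonal]
    intro w hw
    by_contra hwv
    have hqw : ∀ i, ⟪w, q i⟫ = 0 := by
      intro i
      rw [real_inner_comm]
      exact (Submodule.mem_orthogonal _ _).mp hw _ (Submodule.subset_span ⟨i, rfl⟩)
    obtain ⟨x₀, hx₀⟩ := hne
    -- a feasible point positive on all "support" coordinates
    set p : Fin d → Vec d := fun i =>
      if h : ∃ x ∈ X, x i ≠ 0 then h.choose else x₀ with hp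
    have hpX : ∀ i, p i ∈ X := by
      intro i
      by_cases h : ∃ x ∈ X, x i ≠ 0
      · simp only [hp, dif_pos h]; exact h.choose_spec.1
      · simp only [hp, dif_neg h]; exact hx₀
    have hppos : ∀ i, (∃ x ∈ X, x i ≠ 0) → 0 < p i i := by
      intro i h
      have h1 : p i = h.choose := by rw [hp]; simp only [dif_pos h]
      rw [h1]
      exact lt_of_le_of_ne (h.choose_spec.1.2 i) (Ne.symm h.choose_spec.2)
    set xbar : Vec d := ((d : ℝ) + 1)⁻¹ • (x₀ + ∑ i, p i) with hxbar
    have hd1 : (0:ℝ) < (d : ℝ) + 1 := by positivity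
    have hLsum : L (x₀ + ∑ i, p i) = ((d : ℝ) + 1) • b := by
      rw [map_add, map_sum]
      have h1 : ∀ i ∈ Finset.univ, L (p i) = b := fun i _ => by rw [hLdef]; exact (hpX i).1
      rw [Finset.sum_congr rfl h1, Finset.sum_const, Finset.card_univ, Fintype.card_fin,
        hLdef, hx₀.1, add_smul, one_smul, add_comm]
      congr 1
      exact (Nat.cast_smul_eq_nsmul ℝ d b).symm
    have hxbarX : xbar ∈ X := by
      constructor
      · have : L xbar = b := by
          rw [hxbar, map_smul, hLsum, smul_smul, inv_mul_cancel₀ hd1.ne', one_smul]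
        exact this
      · intro i
        have : xbar i = ((d : ℝ) + 1)⁻¹ * (x₀ i + ∑ j, p j i) := by
          simp [hxbar, apply_sum', mul_add]
        rw [this]
        have h2 : 0 ≤ x₀ i + ∑ j, p j i := by
          have := hx₀.2 i
          have hs : 0 ≤ ∑ j, p j i := Finset.sum_nonneg fun j _ => (hpX j).2 i
          linarith
        positivity
    have hxbarpos : ∀ i, (∃ x ∈ X, x i ≠ 0) → 0 < xbar i := by
      intro i hi
      have happ : xbar i = ((d : ℝ) + 1)⁻¹ * (x₀ i + ∑ j, p j i) := by
        simp [hxbar, apply_sum', mul_add]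
      rw [happ]
      have h3 : 0 < ∑ j, p j i :=
        Finset.sum_pos' (fun j _ => (hpX j).2 i) ⟨i, Finset.mem_univ i, hppos i hi⟩
      have := hx₀.2 i
      have : 0 < x₀ i + ∑ j, p j i := by linarith
      positivity
    have hLxbar : L xbar = b := hxbarX.1
    have hvj : ∀ j, (¬ ∃ x ∈ X, x j ≠ 0) → v j = 0 := by
      intro j hj
      have hle : F0 X ≤ LinearMap.ker ((EuclideanSpace.proj j : Vec d →L[ℝ] ℝ) : Vec d →ₗ[ℝ] ℝ) := by
        apply Submodule.span_le.mpr
        rintro _ ⟨i, hi, rfl⟩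
        have hij : j ≠ i := fun hji => hj (hji ▸ hi)
        have : (EuclideanSpace.single i (1:ℝ)) j = 0 := by
          simp [EuclideanSpace.single_apply, hij]
        exact this
      exact hle hvF
    clear_value xbar p
    -- choose step size
    set s : Fin d → ℝ := fun i => if v i = 0 then 1 else xbar i / |v i| with hs
    have hspos : ∀ i, 0 < s i := by
      intro i
      by_cases h : v i = 0
      · simp [hs, h]
      · have hi : ∃ x ∈ X, x i ≠ 0 := by
          by_contra hcon
          exact h (hvj i hcon)
        simp only [hs, if_neg h]
        exact div_pos (hxbarpos i hi) (abs_pos.mpr h)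
    set T : Finset ℝ := insert 1 (Finset.univ.image s) with hT
    have hTne : T.Nonempty := ⟨1, Finset.mem_insert_self 1 _⟩
    set t : ℝ := T.min' hTne with ht
    have htpos : 0 < t := by
      rw [ht, Finset.lt_min'_iff]
      intro y hy
      rcases Finset.mem_insert.mp hy with h | h
      · rw [h]; norm_num
      · obtain ⟨i, _, rfl⟩ := Finset.mem_image.mp h
        exact hspos i
    have hts : ∀ i, t ≤ s i := fun i =>
      Finset.min'_le _ _ (Finset.mem_insert_of_mem (Finset.mem_image_of_mem s (Finset.mem_univ i)))
    set y : Vec d := xbar + t • v with hy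
    have hyX : y ∈ X := by
      constructor
      · have : L y = b := by
          rw [hy, map_add, map_smul, hvK, smul_zero, add_zero]
          exact hxbarX.1
        exact this
      · intro i
        have happ : y i = xbar i + t * v i := by simp [hy]
        rw [happ]
        rcases lt_trichotomy (v i) 0 with hvi | hvi | hvi
        · have hne' : v i ≠ 0 := hvi.ne
          have hsi : s i = xbar i / |v i| := by simp [hs, hne']
          have habs : |v i| = -v i := abs_of_neg hvi
          have h4 : t * |v i| ≤ xbar i := by
            have h5 := hts i
            rw [hsi] at h5
            calc t * |v i| ≤ (xbar i / |v i|) * |v i| := by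
                  apply mul_le_mul_of_nonneg_right h5 (abs_nonneg _)
              _ = xbar i := div_mul_cancel₀ _ (abs_ne_zero.mpr hne')
          rw [habs] at h4
          linarith
        · rw [hvi, mul_zero, add_zero]; exact hxbarX.2 i
        · have := hxbarX.2 i
          nlinarith
    -- invariance applied with c = 0, c' = w
    have heq : argminSet X 0 = argminSet X w := by
      apply h
      intro i
      rw [inner_zero_left, hqw i]
    have hX0 : argminSet X 0 = X := by
      ext z
      simp [argminSet]
    have hxm : xbar ∈ argminSet X w := by rw [← heq, hX0]; exact hxbarX
    have hym : y ∈ argminSet X w := by rw [← heq, hX0]; exact hyX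
    have h6 : ⟪w, xbar⟫ ≤ ⟪w, y⟫ := hxm.2 y hyX
    have h7 : ⟪w, y⟫ ≤ ⟪w, xbar⟫ := hym.2 xbar hxbarX
    have h8 : ⟪w, y⟫ = ⟪w, xbar⟫ + t * ⟪w, v⟫ := by
      rw [hy, inner_add_right, real_inner_smul_right]
    have h9 : t * ⟪w, v⟫ = 0 := by linarith
    exact hwv ((mul_eq_zero.mp h9).resolve_left htpos.ne')
  · -- span inclusion → sufficiency
    intro hle c c' hcc'
    have hperp : ∀ u ∈ Submodule.span ℝ (Set.range q), ⟪c - c', u⟫ = 0 := by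
      intro u hu
      have hle2 : Submodule.span ℝ (Set.range q) ≤
          LinearMap.ker ((innerSL ℝ (c - c') : Vec d →L[ℝ] ℝ) : Vec d →ₗ[ℝ] ℝ) := by
        apply Submodule.span_le.mpr
        rintro _ ⟨i, rfl⟩
        have : ⟪c - c', q i⟫ = 0 := by
          rw [inner_sub_left, hcc' i, sub_self]
        exact LinearMap.mem_ker.mpr this
      exact LinearMap.mem_ker.mp (hle2 hu)
    have hkey : ∀ x ∈ X, ∀ y ∈ X, ⟪c, x⟫ - ⟪c, y⟫ = ⟪c', x⟫ - ⟪c', y⟫ := by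
      intro x hx y hy
      have h0 : ⟪c - c', x - y⟫ = 0 := hperp _ (hle (hdiff hx hy))
      rw [inner_sub_left, inner_sub_right, inner_sub_right] at h0
      linarith
    ext z
    constructor
    · rintro ⟨hz, hmin⟩
      refine ⟨hz, fun y hy => ?_⟩
      have := hkey z hz y hy
      have := hmin y hy
      linarith
    · rintro ⟨hz, hmin⟩
      refine ⟨hz, fun y hy => ?_⟩
      have := hkey z hz y hy
      have := hmin y hy
      linarith
end
end

section
/- Let 𝒟 = {q₁,…,q_N} ⊆ ℝ^d and suppose F₀ ∩ Ker A is not contained in span 𝒟. Then for every map x̂ : ℝ^N → 𝒳 and every K > 0 there exists c ∈ ℝ^d such that c⊤x̂(c⊤q₁,…,c⊤q_N) ≥ K + min_{x∈𝒳} c⊤x. -/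
open scoped RealInnerProductSpace

noncomputable section

lemma exists_orth_aux {d : ℕ} (S : Set (Vec d)) (hfin : S.Finite) (v : Vec d)
    (hv : v ∉ Submodule.span ℝ S) :
    ∃ c : Vec d, (∀ u ∈ S, ⟪c, u⟫ = 0) ∧ 0 < ⟪c, v⟫ := by
  set K := Submodule.span ℝ S with hK
  haveI : FiniteDimensional ℝ K := FiniteDimensional.span_of_finite ℝ hfin
  set p : Vec d := (K.orthogonalProjection v : Vec d) with hp
  have hpK : p ∈ K := (K.orthogonalProjection v).2
  set c : Vec d := v - p with hc
  have hcK : c ∈ Kᗮ := K.sub_starProjection_mem_orthogonal v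
  have hc0 : c ≠ 0 := by
    intro h
    apply hv
    have : v = p := by rw [← sub_eq_zero]; exact h
    rw [this]; exact hpK
  refine ⟨c, ?_, ?_⟩
  · intro u hu
    have := (Submodule.mem_orthogonal K c).mp hcK u (Submodule.subset_span hu)
    rwa [real_inner_comm] at this
  · have hcp : ⟪c, p⟫ = 0 := by
      have := (Submodule.mem_orthogonal K c).mp hcK p hpK
      rwa [real_inner_comm] at this
    have : ⟪c, v⟫ = ‖c‖ ^ 2 := by
      have hv' : v = c + p := by rw [hc]; abel
      rw [hv', inner_add_right, hcp, add_zero, real_inner_self_eq_norm_sq]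
    rw [this]
    exact pow_pos (norm_pos_iff.mpr hc0) 2

lemma F0_coord {d : ℕ} (X : Set (Vec d)) (j : Fin d) (hj : ∀ x ∈ X, x j = 0) :
    ∀ w ∈ F0 X, w j = 0 := by
  intro w hw
  induction hw using Submodule.span_induction with
  | mem v hv =>
    obtain ⟨i, ⟨x, hx, hxi⟩, rfl⟩ := hv
    have hij : i ≠ j := fun h => hxi (h ▸ hj x hx)
    simp [EuclideanSpace.single_apply, hij.symm]
  | zero => simp
  | add a b _ _ ha hb => simp [ha, hb]
  | smul r a _ ha => simp [ha]

/-- if F₀ ∩ Ker A ⊄ span 𝒟, then every decision rule x̂ : ℝ^N → 𝒳 can be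
made arbitrarily suboptimal: for every K > 0 there is c with
c⊤x̂(c⊤q₁,…,c⊤q_N) ≥ K + min_{x∈𝒳} c⊤x. -/
theorem stmt5 {d m N : ℕ} (A : Matrix (Fin m) (Fin d) ℝ) (b : Fin m → ℝ)
    (hne : (feasibleSet A b).Nonempty) (hbdd : Bornology.IsBounded (feasibleSet A b))
    (q : Fin N → Vec d)
    (hns : ¬ F0 (feasibleSet A b) ⊓ kerA A ≤ Submodule.span ℝ (Set.range q)) :
    ∀ xhat : (Fin N → ℝ) → Vec d, (∀ o, xhat o ∈ feasibleSet A b) →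
      ∀ K : ℝ, 0 < K → ∃ c : Vec d,
        K + sInf ((fun x => ⟪c, x⟫) '' feasibleSet A b) ≤
          ⟪c, xhat (fun i => ⟪c, q i⟫)⟫ := by
  intro xhat hxhat K hK
  set X := feasibleSet A b with hXdef
  obtain ⟨v, hvmem, hvq⟩ := SetLike.not_le_iff_exists.mp hns
  obtain ⟨hvF, hvker⟩ := Submodule.mem_inf.mp hvmem
  clear hns hvmem
  have hAv : A.mulVec (v : Fin d → ℝ) = 0 := hvker
  have hv0 : v ≠ 0 := fun h => hvq (h ▸ Submodule.zero_mem _)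
  have hex : ∃ i : Fin d, v i ≠ 0 := by
    by_contra h
    push_neg at h
    exact hv0 (by ext i; simpa using h i)
  obtain ⟨i₀, hi₀⟩ := hex
  haveI : Nonempty (Fin d) := ⟨i₀⟩
  have hd : (0:ℝ) < d := by exact_mod_cast i₀.pos
  -- choose points giving positive coordinates
  have hy : ∀ i : Fin d, ∃ y, y ∈ X ∧ ((∃ x ∈ X, x i ≠ 0) → y i ≠ 0) := by
    intro i
    by_cases h : ∃ x ∈ X, x i ≠ 0
    · obtain ⟨x, hx, hxi⟩ := h; exact ⟨x, hx, fun _ => hxi⟩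
    · obtain ⟨x0, hx0⟩ := hne; exact ⟨x0, hx0, fun h' => absurd h' h⟩
  choose y hyX hyi using hy
  set xb : Vec d := (d:ℝ)⁻¹ • ∑ i, y i with hxb
  have hxbapp : ∀ j, xb j = (d:ℝ)⁻¹ * ∑ i, y i j := by
    intro j
    rw [hxb]
    show (d:ℝ)⁻¹ * (∑ i, y i) j = _
    have h2 : (∑ i : Fin d, y i) j = ∑ i, y i j :=
      map_sum (EuclideanSpace.projₗ (𝕜 := ℝ) j) y Finset.univ
    rw [h2]
  have hynn : ∀ i j, 0 ≤ y i j := fun i j => (hyX i).2 j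
  have hxbnn : ∀ j, 0 ≤ xb j := by
    intro j
    rw [hxbapp]
    have h1 : 0 ≤ ∑ i, y i j := Finset.sum_nonneg fun i _ => hynn i j
    positivity
  have hxbX : xb ∈ X := by
    refine ⟨?_, hxbnn⟩
    have h1 : A.mulVec (xb : Fin d → ℝ) = (d:ℝ)⁻¹ • ∑ i, A.mulVec (y i) := by
      show A.mulVecLin xb = _
      rw [hxb, WithLp.ofLp_smul, WithLp.ofLp_sum, map_smul, map_sum]
      rfl
    rw [h1]
    have h2 : ∀ i : Fin d, A.mulVec (y i : Fin d → ℝ) = b := fun i => (hyX i).1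
    simp only [h2, Finset.sum_const, Finset.card_univ, Fintype.card_fin]
    rw [← Nat.cast_smul_eq_nsmul ℝ, smul_smul, inv_mul_cancel₀ (ne_of_gt hd), one_smul]
  have hxbpos : ∀ j, v j ≠ 0 → 0 < xb j := by
    intro j hvj
    have hjS : ∃ x ∈ X, x j ≠ 0 := by
      by_contra h
      push_neg at h
      exact hvj (F0_coord X j (fun x hx => by simpa using h x hx) v hvF)
    have hyj : 0 < y j j := lt_of_le_of_ne (hynn j j) (Ne.symm (hyi j hjS))
    rw [hxbapp]
    have : 0 < ∑ i, y i j :=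
      Finset.sum_pos' (fun i _ => hynn i j) ⟨j, Finset.mem_univ j, hyj⟩
    positivity
  -- epsilon
  set g : Fin d → ℝ := fun i => if v i = 0 then 1 else xb i / |v i| with hg
  set ε : ℝ := Finset.univ.inf' Finset.univ_nonempty g with hε
  have hgpos : ∀ i, 0 < g i := by
    intro i
    rw [hg]
    by_cases h : v i = 0
    · simp [h]
    · simp only [h, if_false]
      exact div_pos (hxbpos i h) (abs_pos.mpr h)
  have hεpos : 0 < ε := by
    rw [hε, Finset.lt_inf'_iff]
    exact fun i _ => hgpos i
  have hεle : ∀ i, ε ≤ if v i = 0 then 1 else xb i / |v i| := by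
    intro i
    have h := Finset.inf'_le g (Finset.mem_univ i)
    rw [hε]
    exact h
  set x' : Vec d := xb + ε • v with hx'
  have hx'app : ∀ j, x' j = xb j + ε * v j := fun j => rfl
  have hx'X : x' ∈ X := by
    constructor
    · have h1 : A.mulVec (x' : Fin d → ℝ) = A.mulVec xb + ε • A.mulVec (v : Fin d → ℝ) := by
        show A.mulVecLin x' = A.mulVecLin xb + ε • A.mulVecLin v
        rw [hx', WithLp.ofLp_add, WithLp.ofLp_smul, map_add]
        congr 1
        exact map_smul A.mulVecLin ε (v : Fin d → ℝ)
      rw [h1, hAv, hxbX.1, smul_zero, add_zero]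
    · intro j
      rw [hx'app]
      rcases lt_trichotomy (v j) 0 with hvj | hvj | hvj
      · have hge : ε ≤ xb j / |v j| := by
          have := hεle j
          rwa [if_neg (ne_of_lt hvj)] at this
        have habs : |v j| = -v j := abs_of_neg hvj
        rw [habs] at hge
        have h2 : ε * (-(v j)) ≤ xb j := by
          rw [← le_div_iff₀ (by linarith)] at *
          linarith [hge]
        linarith
      · rw [hvj, mul_zero, add_zero]; exact hxbnn j
      · have := hxbnn j
        nlinarith
  -- orthogonal direction
  obtain ⟨c₀, hc₀q, hc₀v⟩ := exists_orth_aux (Set.range q) (Set.finite_range q) v hvq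
  set xs : Vec d := xhat (fun _ => 0) with hxs
  set a : ℝ := ⟪c₀, xs⟫ with ha
  set u : ℝ := ⟪c₀, xb⟫ with hu
  have hw : ⟪c₀, x'⟫ = u + ε * ⟪c₀, v⟫ := by
    rw [hu, hx', inner_add_right]
    congr 1
    exact real_inner_smul_right c₀ v ε
  have huw : u < ⟪c₀, x'⟫ := by
    rw [hw]
    nlinarith
  -- pick sign and witness
  obtain ⟨s, y₀, hy₀X, hδ⟩ : ∃ (s : ℝ) (y₀ : Vec d), y₀ ∈ X ∧ 0 < s * a - s * ⟪c₀, y₀⟫ := by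
    rcases lt_or_ge u a with h | h
    · exact ⟨1, xb, hxbX, by rw [← hu]; linarith⟩
    · exact ⟨-1, x', hx'X, by nlinarith⟩
  set δ : ℝ := s * a - s * ⟪c₀, y₀⟫ with hδdef
  set c : Vec d := ((K / δ) * s) • c₀ with hc
  have hcq : ∀ i, ⟪c, q i⟫ = 0 := by
    intro i
    rw [hc, real_inner_smul_left, hc₀q (q i) (Set.mem_range_self i), mul_zero]
  have hobs : xhat (fun i => ⟪c, q i⟫) = xs := congrArg xhat (funext hcq)
  refine ⟨c, ?_⟩
  rw [hobs]
  -- bounded below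
  obtain ⟨R, hR⟩ := hbdd.exists_norm_le
  have hbdd' : BddBelow ((fun x => ⟪c, x⟫) '' X) := by
    refine ⟨-(‖c‖ * R), ?_⟩
    rintro r ⟨x, hx, rfl⟩
    have h1 : |⟪c, x⟫| ≤ ‖c‖ * ‖x‖ := abs_real_inner_le_norm c x
    have h2 : ‖c‖ * ‖x‖ ≤ ‖c‖ * R := by
      apply mul_le_mul_of_nonneg_left (hR x hx) (norm_nonneg c)
    have := neg_abs_le ⟪c, x⟫
    simp only
    linarith
  have hinf : sInf ((fun x => ⟪c, x⟫) '' X) ≤ ⟪c, y₀⟫ :=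
    csInf_le hbdd' ⟨y₀, hy₀X, rfl⟩
  have hcy : ⟪c, y₀⟫ = (K / δ) * (s * ⟪c₀, y₀⟫) := by
    rw [hc, real_inner_smul_left]; ring
  have hcxs : ⟪c, xs⟫ = (K / δ) * (s * a) := by
    rw [hc, real_inner_smul_left, ha]; ring
  have hKδ : (K / δ) * δ = K := div_mul_cancel₀ K (ne_of_gt hδ)
  rw [hcxs]
  have key : (K / δ) * (s * a) = K + (K / δ) * (s * ⟪c₀, y₀⟫) := by
    linear_combination (-(K/δ)) * hδdef + hKδ
  rw [key]
  linarith [hinf, hcy.le, hcy.ge]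
end
end

section
/- Let 𝒞 ⊆ ℝ^d be an open convex set and 𝒟 = {q₁,…,q_N} ⊆ ℝ^d. Then 𝒟 is a sufficient decision dataset for 𝒞 and 𝒳 if and only if dir(𝒳*(𝒞)) ⊆ span 𝒟. -/
open scoped RealInnerProductSpace

noncomputable section

section proofAux

lemma feasible_isCompact {d m : ℕ} (A : Matrix (Fin m) (Fin d) ℝ) (b : Fin m → ℝ)
    (hbdd : Bornology.IsBounded (feasibleSet A b)) : IsCompact (feasibleSet A b) := by
  have hL : Continuous fun x : Vec d => A.mulVec x :=
    ((Matrix.mulVecLin A).comp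
      (WithLp.linearEquiv 2 ℝ (Fin d → ℝ)).toLinearMap).continuous_of_finiteDimensional
  have h1 : IsClosed {x : Vec d | A.mulVec x = b} := isClosed_eq hL continuous_const
  have h2 : IsClosed {x : Vec d | ∀ i, 0 ≤ x i} := by
    have : {x : Vec d | ∀ i, 0 ≤ x i} = ⋂ i, {x : Vec d | 0 ≤ x i} := by ext x; simp
    rw [this]
    exact isClosed_iInter fun i =>
      isClosed_le continuous_const (EuclideanSpace.proj (𝕜 := ℝ) i).continuous
  exact Metric.isCompact_of_isClosed_isBounded (h1.inter h2) hbdd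

lemma argmin_nonempty {d : ℕ} {X : Set (Vec d)} (hXc : IsCompact X) (hXne : X.Nonempty)
    (c : Vec d) : (argminSet X c).Nonempty := by
  obtain ⟨x, hx, hmin⟩ := hXc.exists_isMinOn hXne
    (f := fun y => ⟪c, y⟫) (Continuous.continuousOn (continuous_const.inner continuous_id))
  exact ⟨x, hx, fun y hy => hmin hy⟩

set_option maxHeartbeats 2000000 in
lemma core {d N : ℕ} {X C : Set (Vec d)} (hXc : IsCompact X) (hXne : X.Nonempty)
    (hCopen : IsOpen C) (hCconv : Convex ℝ C) {q : Fin N → Vec d}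
    (hsuf : SufficientDataset C X q)
    {c₁ c₂ x₁ x₂ w : Vec d} (hc₁ : c₁ ∈ C) (hc₂ : c₂ ∈ C)
    (hx₁ : x₁ ∈ argminSet X c₁) (hx₂ : x₂ ∈ argminSet X c₂)
    (hw : ∀ i, ⟪w, q i⟫ = 0) : ⟪w, x₁ - x₂⟫ = 0 := by
  obtain ⟨Xhat, hXhat⟩ := hsuf
  -- equal argmins for cost vectors agreeing on the dataset
  have key : ∀ c ∈ C, ∀ c' ∈ C, (∀ i, ⟪c, q i⟫ = ⟪c', q i⟫) →
      argminSet X c = argminSet X c' := by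
    intro c hc c' hc' hagree
    rw [← hXhat c hc, show (fun i => ⟪c, q i⟫) = (fun i => ⟪c', q i⟫) from funext hagree,
      hXhat c' hc']
  rcases eq_or_ne w 0 with rfl | hw0
  · simp
  choose opt hopt using fun c : Vec d => argmin_nonempty hXc hXne c
  set v : Vec d → ℝ := fun c => ⟪c, opt c⟫ with hv
  have hvle : ∀ c : Vec d, ∀ y ∈ X, v c ≤ ⟪c, y⟫ := fun c => (hopt c).2
  have hvmem : ∀ c : Vec d, opt c ∈ X := fun c => (hopt c).1
  -- concavity of the optimal value
  have hconc : ∀ (a b : Vec d) (l : ℝ), 0 ≤ l → l ≤ 1 →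
      l * v a + (1 - l) * v b ≤ v (l • a + (1 - l) • b) := by
    intro a b l hl0 hl1
    have hx := hvmem (l • a + (1 - l) • b)
    have h1 : v a ≤ ⟪a, opt (l • a + (1 - l) • b)⟫ := hvle a _ hx
    have h2 : v b ≤ ⟪b, opt (l • a + (1 - l) • b)⟫ := hvle b _ hx
    have h3 : v (l • a + (1 - l) • b)
        = l * ⟪a, opt (l • a + (1 - l) • b)⟫ + (1 - l) * ⟪b, opt (l • a + (1 - l) • b)⟫ := by
      simp only [hv, inner_add_left, real_inner_smul_left]
    rw [h3]
    nlinarith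
  -- the segment
  set ct : ℝ → Vec d := fun t => c₁ + t • (c₂ - c₁) with hct
  have hctC : ∀ t, t ∈ Set.Icc (0:ℝ) 1 → ct t ∈ C := by
    intro t ht
    have h := hCconv hc₁ hc₂ (by linarith [ht.1, ht.2] : (0:ℝ) ≤ 1 - t) ht.1 (by ring)
    have : (1 - t) • c₁ + t • c₂ = ct t := by simp only [hct]; module
    rwa [this] at h
  have hctcont : Continuous ct := by
    exact continuous_const.add (continuous_id.smul continuous_const)
  -- thickening
  obtain ⟨δ, hδ, hthick⟩ := (isCompact_Icc.image hctcont).exists_thickening_subset_open hCopen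
    (by rintro _ ⟨t, ht, rfl⟩; exact hctC t ht)
  set ε₀ : ℝ := δ / (2 * ‖w‖) with hε₀
  have hwpos : 0 < ‖w‖ := norm_pos_iff.mpr hw0
  have hε₀pos : 0 < ε₀ := div_pos hδ (by positivity)
  have hmemC : ∀ t ∈ Set.Icc (0:ℝ) 1, ∀ ε : ℝ, |ε| ≤ ε₀ → ct t + ε • w ∈ C := by
    intro t ht ε hε
    apply hthick
    rw [Metric.mem_thickening_iff]
    refine ⟨ct t, ⟨t, ht, rfl⟩, ?_⟩
    rw [dist_eq_norm]
    have : ct t + ε • w - ct t = ε • w := by abel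
    rw [this, norm_smul]
    calc ‖ε‖ * ‖w‖ ≤ ε₀ * ‖w‖ := by
          apply mul_le_mul_of_nonneg_right hε (norm_nonneg _)
      _ < δ := by
          rw [hε₀]; rw [div_mul_eq_mul_div]
          rw [div_lt_iff₀ (by positivity)]
          nlinarith
  -- argmin sets don't change under perturbation by w
  have hAeq : ∀ t ∈ Set.Icc (0:ℝ) 1, ∀ ε : ℝ, |ε| ≤ ε₀ →
      argminSet X (ct t + ε • w) = argminSet X (ct t) := by
    intro t ht ε hε
    apply key _ (hmemC t ht ε hε) _ (hctC t ht)
    intro i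
    simp only [inner_add_left, real_inner_smul_left, hw i, mul_zero, add_zero]
  set W : ℝ → ℝ := fun t => ⟪w, opt (ct t)⟫ with hW
  set g : ℝ → ℝ := fun t => v (ct t) with hg
  -- the value identity
  have hid : ∀ t ∈ Set.Icc (0:ℝ) 1, ∀ ε : ℝ, |ε| ≤ ε₀ →
      v (ct t + ε • w) = g t + ε * W t := by
    intro t ht ε hε
    have h1 : opt (ct t) ∈ argminSet X (ct t + ε • w) := by
      rw [hAeq t ht ε hε]; exact hopt (ct t)
    have h2 : opt (ct t + ε • w) ∈ X := hvmem _
    have e1 : v (ct t + ε • w) ≤ ⟪ct t + ε • w, opt (ct t)⟫ := hvle _ _ h1.1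
    have e2 : ⟪ct t + ε • w, opt (ct t)⟫ ≤ ⟪ct t + ε • w, opt (ct t + ε • w)⟫ := h1.2 _ h2
    have e3 : v (ct t + ε • w) = ⟪ct t + ε • w, opt (ct t)⟫ := le_antisymm e1 e2
    rw [e3, inner_add_left, real_inner_smul_left]
  -- all argmin points at parameter t have w-value W t
  have hsameW : ∀ t ∈ Set.Icc (0:ℝ) 1, ∀ x ∈ argminSet X (ct t), ⟪w, x⟫ = W t := by
    intro t ht x hx
    have h1 : x ∈ argminSet X (ct t + ε₀ • w) := by
      rw [hAeq t ht ε₀ (by rw [abs_of_pos hε₀pos])]; exact hx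
    have ho : opt (ct t) ∈ argminSet X (ct t + ε₀ • w) := by
      rw [hAeq t ht ε₀ (by rw [abs_of_pos hε₀pos])]; exact hopt (ct t)
    have e1 : ⟪ct t + ε₀ • w, x⟫ = ⟪ct t + ε₀ • w, opt (ct t)⟫ :=
      le_antisymm (h1.2 _ ho.1) (ho.2 _ h1.1)
    have e2 : ⟪ct t, x⟫ = ⟪ct t, opt (ct t)⟫ :=
      le_antisymm (hx.2 _ (hvmem _)) ((hopt (ct t)).2 _ hx.1)
    simp only [inner_add_left, real_inner_smul_left] at e1
    rw [e2] at e1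
    have := mul_left_cancel₀ (ne_of_gt hε₀pos) (by linarith : ε₀ * ⟪w, x⟫ = ε₀ * ⟪w, opt (ct t)⟫)
    exact this
  -- concavity of g
  have hgconc : ∀ (a b l : ℝ), 0 ≤ l → l ≤ 1 →
      l * g a + (1 - l) * g b ≤ g (l * a + (1 - l) * b) := by
    intro a b l hl0 hl1
    have h := hconc (ct a) (ct b) l hl0 hl1
    have e : l • ct a + (1 - l) • ct b = ct (l * a + (1 - l) * b) := by
      simp only [hct]; module
    rwa [e] at h
  -- secant (three-point) concavity inequality, division-free
  have hg3 : ∀ p u r : ℝ, p < u → u < r →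
      (r - u) * g p + (u - p) * g r ≤ (r - p) * g u := by
    intro p u r hpu hur
    have hrp : (0:ℝ) < r - p := by linarith
    set l : ℝ := (r - u) / (r - p) with hl
    have hl0 : 0 ≤ l := div_nonneg (by linarith) hrp.le
    have hl1 : l ≤ 1 := by
      rw [hl, div_le_one hrp]; linarith
    have hc := hgconc p r l hl0 hl1
    have e : l * p + (1 - l) * r = u := by
      rw [hl]; field_simp; ring
    rw [e] at hc
    have e2 : (r - p) * (l * g p + (1 - l) * g r) = (r - u) * g p + (u - p) * g r := by
      rw [hl]; field_simp; try ring
    calc (r - u) * g p + (u - p) * g r = (r - p) * (l * g p + (1 - l) * g r) := e2.symm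
      _ ≤ (r - p) * g u := mul_le_mul_of_nonneg_left hc hrp.le
  -- the step inequality
  have hstep : ∀ a b : ℝ, a ∈ Set.Icc (0:ℝ) 1 → b ∈ Set.Icc (0:ℝ) 1 →
      ε₀ * |W b - W a| ≤ 2 * g ((a + b) / 2) - g a - g b := by
    intro a b ha hb
    have hm : (a + b) / 2 ∈ Set.Icc (0:ℝ) 1 :=
      ⟨by linarith [ha.1, hb.1], by linarith [ha.2, hb.2]⟩
    have hmid : ∀ ε : ℝ, |ε| ≤ ε₀ →
        (1/2 : ℝ) * v (ct a + (-ε) • w) + (1 - 1/2 : ℝ) * v (ct b + ε • w) ≤ g ((a+b)/2) := by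
      intro ε hε
      have h := hconc (ct a + (-ε) • w) (ct b + ε • w) (1/2) (by norm_num) (by norm_num)
      have e : (1/2 : ℝ) • (ct a + (-ε) • w) + (1 - 1/2 : ℝ) • (ct b + ε • w) = ct ((a+b)/2) := by
        simp only [hct]; module
      rw [e] at h
      exact h
    have hεabs : |(-ε₀ : ℝ)| ≤ ε₀ := by rw [abs_neg, abs_of_pos hε₀pos]
    have hεabs' : |(ε₀ : ℝ)| ≤ ε₀ := by rw [abs_of_pos hε₀pos]
    have h1 := hmid ε₀ hεabs'
    have h2 := hmid (-ε₀) (by rw [abs_neg, abs_of_pos hε₀pos])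
    rw [hid a ha _ hεabs, hid b hb _ hεabs'] at h1
    rw [neg_neg] at h2
    rw [hid a ha _ hεabs', hid b hb _ hεabs] at h2
    rcases abs_cases (W b - W a) with ⟨he, _⟩ | ⟨he, _⟩ <;> rw [he] <;> nlinarith
  -- main bound for each n
  have hbound : ∀ n : ℕ, 0 < n → |W 1 - W 0| * ε₀ ≤ (1 / (2 * (n:ℝ))) * (g 0 - g (-1) + (g 1 - g 2)) := by
    intro n hn
    have hnR : (0:ℝ) < (n:ℝ) := by exact_mod_cast hn
    set h : ℝ := 1 / (2 * (n:ℝ)) with hh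
    have hhpos : 0 < h := by positivity
    have hn1R : (1:ℝ) ≤ (n:ℝ) := by exact_mod_cast hn
    have hh1 : h ≤ 1/2 := by
      rw [hh]
      rw [div_le_div_iff₀ (by positivity) (by norm_num)]
      linarith
    set D : ℕ → ℝ := fun j => g (((j:ℝ) + 1) * h) - g ((j:ℝ) * h) with hD
    have hDanti : ∀ j : ℕ, D (j + 1) ≤ D j := by
      intro j
      have hc := hg3 ((j:ℝ) * h) (((j:ℝ) + 1) * h) (((j:ℝ) + 2) * h)
        (mul_lt_mul_of_pos_right (by linarith) hhpos)
        (mul_lt_mul_of_pos_right (by linarith) hhpos)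
      have e1 : ((j:ℝ) + 2) * h - ((j:ℝ) + 1) * h = h := by ring
      have e2 : ((j:ℝ) + 1) * h - (j:ℝ) * h = h := by ring
      have e3 : ((j:ℝ) + 2) * h - (j:ℝ) * h = 2 * h := by ring
      rw [e1, e2, e3] at hc
      simp only [hD]
      push_cast
      have e' : ((j:ℝ) + 1 + 1) * h = ((j:ℝ) + 2) * h := by ring
      rw [e']
      have hmul : h * (g ((j:ℝ) * h) + g (((j:ℝ) + 2) * h)) ≤ h * (2 * g (((j:ℝ) + 1) * h)) := by
        linarith
      have := (mul_le_mul_iff_right₀ hhpos).mp hmul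
      linarith
    have hsum : ∀ M : ℕ, ∑ k ∈ Finset.range M, (D (2 * k) - D (2 * k + 1)) ≤ D 0 - D (2 * M) := by
      intro M
      induction M with
      | zero => simp
      | succ M ih =>
        rw [Finset.sum_range_succ]
        have h1 := hDanti (2 * M)
        have h2 := hDanti (2 * M + 1)
        have e1 : 2 * (M + 1) = 2 * M + 1 + 1 := by ring
        rw [e1]
        have e2 : 2 * M + 1 = 2 * M + 1 := rfl
        linarith
    -- slope bounds
    have hD0 : D 0 ≤ h * (g 0 - g (-1)) := by
      have hc := hg3 (-1) 0 h (by linarith) hhpos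
      simp only [hD]
      push_cast
      have e2 : ((0:ℝ) + 1) * h = h := by ring
      have e3 : (0:ℝ) * h = 0 := by ring
      rw [e2, e3]
      nlinarith
    have hDlast : -(D (2 * n)) ≤ h * (g 1 - g 2) := by
      have hc := hg3 1 (1 + h) 2 (by linarith) (by linarith)
      simp only [hD]
      have e2 : ((2 * n : ℕ) : ℝ) * h = 1 := by
        push_cast
        rw [hh]
        field_simp
      have e3 : (((2 * n : ℕ) : ℝ) + 1) * h = 1 + h := by
        push_cast
        rw [hh]
        field_simp
        try ring
      rw [e2, e3]
      nlinarith
    -- chaining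
    have hWk : ∀ k : ℕ, k ≤ n → ((k:ℝ) / (n:ℝ)) ∈ Set.Icc (0:ℝ) 1 := by
      intro k hk
      constructor
      · positivity
      · rw [div_le_one hnR]; exact_mod_cast hk
    have hterm : ∀ k : ℕ, k < n →
        ε₀ * dist (W ((k:ℝ) / (n:ℝ))) (W (((k:ℝ) + 1) / (n:ℝ))) ≤ D (2 * k) - D (2 * k + 1) := by
      intro k hk
      have ha := hWk k (le_of_lt hk)
      have hb : (((k:ℝ) + 1) / (n:ℝ)) ∈ Set.Icc (0:ℝ) 1 := by
        have : ((k:ℝ) + 1) / (n:ℝ) = ((k + 1 : ℕ) : ℝ) / (n:ℝ) := by push_cast; ring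
        rw [this]; exact hWk (k+1) hk
      have hs := hstep ((k:ℝ) / (n:ℝ)) (((k:ℝ) + 1) / (n:ℝ)) ha hb
      have eD : 2 * g ((((k:ℝ) / (n:ℝ)) + (((k:ℝ) + 1) / (n:ℝ))) / 2) - g ((k:ℝ) / (n:ℝ))
          - g (((k:ℝ) + 1) / (n:ℝ)) = D (2 * k) - D (2 * k + 1) := by
        simp only [hD]
        push_cast
        have e1 : ((k:ℝ) / (n:ℝ) + ((k:ℝ) + 1) / (n:ℝ)) / 2 = (2 * (k:ℝ) + 1) * h := by
          rw [hh]; field_simp; ring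
        have e2 : (k:ℝ) / (n:ℝ) = (2 * (k:ℝ)) * h := by rw [hh]; field_simp
        have e3 : ((k:ℝ) + 1) / (n:ℝ) = (2 * (k:ℝ) + 1 + 1) * h := by rw [hh]; field_simp; ring
        rw [e1, e2, e3]
        ring
      rw [eD] at hs
      rw [Real.dist_eq, abs_sub_comm]
      exact hs
    have hchain := dist_le_range_sum_dist (fun k : ℕ => W ((k:ℝ) / (n:ℝ))) n
    have hfin : ε₀ * dist (W 0) (W 1) ≤ D 0 - D (2 * n) := by
      have h0 : ((0:ℕ):ℝ) / (n:ℝ) = 0 := by simp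
      have h1 : ((n:ℕ):ℝ) / (n:ℝ) = 1 := by field_simp
      calc ε₀ * dist (W 0) (W 1)
          = ε₀ * dist (W (((0:ℕ):ℝ) / (n:ℝ))) (W (((n:ℕ):ℝ) / (n:ℝ))) := by rw [h0, h1]
        _ ≤ ε₀ * ∑ k ∈ Finset.range n, dist (W ((k:ℝ) / (n:ℝ))) (W (((k:ℝ) + 1) / (n:ℝ))) := by
            apply mul_le_mul_of_nonneg_left _ (le_of_lt hε₀pos)
            have := hchain
            convert this using 2
            push_cast
            rfl
            push_cast
            rfl
        _ = ∑ k ∈ Finset.range n, ε₀ * dist (W ((k:ℝ) / (n:ℝ))) (W (((k:ℝ) + 1) / (n:ℝ))) := by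
            rw [Finset.mul_sum]
        _ ≤ ∑ k ∈ Finset.range n, (D (2 * k) - D (2 * k + 1)) := by
            apply Finset.sum_le_sum
            intro k hk
            exact hterm k (Finset.mem_range.mp hk)
        _ ≤ D 0 - D (2 * n) := hsum n
    have : D 0 - D (2 * n) ≤ h * (g 0 - g (-1) + (g 1 - g 2)) := by
      have := hD0
      have := hDlast
      nlinarith
    rw [Real.dist_eq, abs_sub_comm] at hfin
    calc |W 1 - W 0| * ε₀ = ε₀ * |W 1 - W 0| := by ring
      _ ≤ D 0 - D (2 * n) := hfin
      _ ≤ h * (g 0 - g (-1) + (g 1 - g 2)) := this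
  -- conclude W 1 = W 0
  have hWeq : W 1 = W 0 := by
    by_contra hne'
    have habs : 0 < |W 1 - W 0| := abs_pos.mpr (sub_ne_zero.mpr hne')
    set a := |W 1 - W 0| * ε₀ with ha
    have hapos : 0 < a := mul_pos habs hε₀pos
    set K := g 0 - g (-1) + (g 1 - g 2) with hK
    obtain ⟨n, hn⟩ := exists_nat_gt (max 1 (K / (2 * a)))
    have hn1 : 0 < n := by
      have : (1:ℝ) < (n:ℝ) := lt_of_le_of_lt (le_max_left _ _) hn
      exact_mod_cast lt_trans zero_lt_one this
    have hb := hbound n hn1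
    have hnR : (0:ℝ) < (n:ℝ) := by exact_mod_cast hn1
    have hKn : K / (2 * a) < (n:ℝ) := lt_of_le_of_lt (le_max_right _ _) hn
    have : K < 2 * a * (n:ℝ) := by
      rw [div_lt_iff₀ (by positivity)] at hKn
      linarith [hKn]
    have : a ≤ 1 / (2 * (n:ℝ)) * K := hb
    rw [div_mul_eq_mul_div, one_mul, le_div_iff₀ (by positivity)] at this
    nlinarith
  -- conclude
  have e1 : ⟪w, x₁⟫ = W 0 := by
    apply hsameW 0 (by norm_num) x₁
    have : ct 0 = c₁ := by simp only [hct]; module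
    rw [this]; exact hx₁
  have e2 : ⟪w, x₂⟫ = W 1 := by
    apply hsameW 1 (by norm_num) x₂
    have : ct 1 = c₂ := by simp only [hct]; module
    rw [this]; exact hx₂
  rw [inner_sub_right, e1, e2, hWeq, sub_self]


lemma argmin_eq_of_agree {d N : ℕ} {X C : Set (Vec d)} (hXc : IsCompact X) (hXne : X.Nonempty)
    {q : Fin N → Vec d} (hle : dirSpan X C ≤ Submodule.span ℝ (Set.range q))
    {c c' : Vec d} (hc : c ∈ C) (hc' : c' ∈ C) (hagree : ∀ i, ⟪c, q i⟫ = ⟪c', q i⟫) :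
    argminSet X c = argminSet X c' := by
  have horth : ∀ y ∈ Submodule.span ℝ (Set.range q), ⟪c - c', y⟫ = 0 := by
    intro y hy
    induction hy using Submodule.span_induction with
    | mem y hy =>
      obtain ⟨i, rfl⟩ := hy
      rw [inner_sub_left, hagree i, sub_self]
    | zero => simp
    | add a b _ _ ha hb => rw [inner_add_right, ha, hb, add_zero]
    | smul t a _ ha => rw [real_inner_smul_right, ha, mul_zero]
  have hzero : ∀ x y : Vec d, x ∈ reachable X C → y ∈ reachable X C →
      ⟪c, x⟫ - ⟪c, y⟫ = ⟪c', x⟫ - ⟪c', y⟫ := by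
    intro x y hx hy
    have h0 : ⟪c - c', x - y⟫ = 0 := by
      apply horth
      apply hle
      apply Submodule.subset_span
      exact ⟨x, hx, y, hy, rfl⟩
    rw [inner_sub_left, inner_sub_right, inner_sub_right] at h0
    linarith
  obtain ⟨x, hx⟩ := argmin_nonempty hXc hXne c
  obtain ⟨y, hy⟩ := argmin_nonempty hXc hXne c'
  have hxr : x ∈ reachable X C := Set.mem_biUnion hc hx
  have hyr : y ∈ reachable X C := Set.mem_biUnion hc' hy
  have e1 : ⟪c, x⟫ ≤ ⟪c, y⟫ := hx.2 y hy.1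
  have e2 : ⟪c', y⟫ ≤ ⟪c', x⟫ := hy.2 x hx.1
  have e3 := hzero x y hxr hyr
  ext z
  simp only [argminSet, Set.mem_setOf_eq]
  constructor
  · rintro ⟨hzX, hz⟩
    refine ⟨hzX, fun u hu => ?_⟩
    have hzr : z ∈ reachable X C := Set.mem_biUnion hc ⟨hzX, hz⟩
    have h4 := hzero z y hzr hyr
    have h5 : ⟪c, z⟫ = ⟪c, x⟫ := le_antisymm (hz x hx.1) (hx.2 z hzX)
    have h6 : ⟪c', z⟫ = ⟪c', y⟫ := by linarith
    calc ⟪c', z⟫ = ⟪c', y⟫ := h6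
      _ ≤ ⟪c', u⟫ := hy.2 u hu
  · rintro ⟨hzX, hz⟩
    refine ⟨hzX, fun u hu => ?_⟩
    have hzr : z ∈ reachable X C := Set.mem_biUnion hc' ⟨hzX, hz⟩
    have h4 := hzero z x hzr hxr
    have h5 : ⟪c', z⟫ = ⟪c', y⟫ := le_antisymm (hz y hy.1) (hy.2 z hzX)
    have h6 : ⟪c, z⟫ = ⟪c, x⟫ := by linarith
    calc ⟪c, z⟫ = ⟪c, x⟫ := h6
      _ ≤ ⟪c, u⟫ := hx.2 u hu

end proofAux

/-- for an open convex uncertainty set 𝒞, 𝒟 is a sufficient decision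
dataset iff dir(𝒳*(𝒞)) ⊆ span 𝒟. -/
theorem stmt12 {d m N : ℕ} (A : Matrix (Fin m) (Fin d) ℝ) (b : Fin m → ℝ)
    (hne : (feasibleSet A b).Nonempty) (hbdd : Bornology.IsBounded (feasibleSet A b))
    (C : Set (Vec d)) (hCopen : IsOpen C) (hCconv : Convex ℝ C)
    (q : Fin N → Vec d) :
    SufficientDataset C (feasibleSet A b) q ↔
      dirSpan (feasibleSet A b) C ≤ Submodule.span ℝ (Set.range q) := by
  have hXc : IsCompact (feasibleSet A b) := feasible_isCompact A b hbdd
  constructor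
  · intro hsuf
    rw [dirSpan, Submodule.span_le]
    rintro v ⟨x₁, hx₁, x₂, hx₂, rfl⟩
    simp only [reachable, Set.mem_iUnion] at hx₁ hx₂
    obtain ⟨c₁, hc₁, h1⟩ := hx₁
    obtain ⟨c₂, hc₂, h2⟩ := hx₂
    rw [SetLike.mem_coe, ← Submodule.orthogonal_orthogonal (Submodule.span ℝ (Set.range q))]
    rw [Submodule.mem_orthogonal]
    intro u hu
    have hwq : ∀ i, ⟪u, q i⟫ = 0 := fun i =>
      (Submodule.mem_orthogonal' _ _).mp hu (q i) (Submodule.subset_span ⟨i, rfl⟩)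
    exact core hXc hne hCopen hCconv hsuf hc₁ hc₂ h1 h2 hwq
  · intro hle
    classical
    refine ⟨fun val =>
      if h : ∃ c', c' ∈ C ∧ ∀ i, ⟪c', q i⟫ = val i then
        argminSet (feasibleSet A b) h.choose else ∅, ?_⟩
    intro c hc
    have h : ∃ c', c' ∈ C ∧ ∀ i, ⟪c', q i⟫ = (fun i => ⟪c, q i⟫) i := ⟨c, hc, fun _ => rfl⟩
    beta_reduce
    rw [dif_pos h]
    obtain ⟨hcC, hagree⟩ := h.choose_spec
    exact argmin_eq_of_agree hXc hne hle hcC hc fun i => hagree i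
end
end

section
/- For every c ∈ ℝ^d there exists ε > 0 such that for every c' ∈ ℝ^d with Euclidean distance ‖c − c'‖ < ε, the intersection argmin_{x∈𝒳} c⊤x ∩ argmin_{x∈𝒳} c'⊤x is nonempty. -/
open scoped RealInnerProductSpace

noncomputable section

namespace Stmt13Aux

variable {d m : ℕ} {A : Matrix (Fin m) (Fin d) ℝ} {b : Fin m → ℝ}

lemma mulVec_comb (A : Matrix (Fin m) (Fin d) ℝ) (x y : Vec d) (a bb : ℝ) :
    A.mulVec (a • x + bb • y) = a • A.mulVec x + bb • A.mulVec y := by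
  ext i
  simp [Matrix.mulVec, dotProduct, PiLp.add_apply, PiLp.smul_apply, smul_eq_mul,
    mul_add, Finset.sum_add_distrib, Finset.mul_sum]
  congr 1 <;> exact Finset.sum_congr rfl fun _ _ => by ring

lemma sum_apply' (T : Finset (Fin d)) (g : Fin d → Vec d) (j : Fin d) :
    (∑ i ∈ T, g i) j = ∑ i ∈ T, g i j := by
  classical
  induction T using Finset.induction with
  | empty => simp
  | @insert a s h ih => rw [Finset.sum_insert h, Finset.sum_insert h, PiLp.add_apply, ih]

lemma coord_continuous (i : Fin d) : Continuous fun x : Vec d => x i :=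
  (continuous_apply i).comp (PiLp.continuous_ofLp 2 fun _ : Fin d => ℝ)

lemma feas_closed : IsClosed (feasibleSet A b) := by
  have h1 : feasibleSet A b =
      (⋂ i, {x : Vec d | A.mulVec x i = b i}) ∩ ⋂ i, {x : Vec d | 0 ≤ x i} := by
    ext x
    simp [feasibleSet, Set.mem_iInter, funext_iff]
  rw [h1]
  refine IsClosed.inter (isClosed_iInter fun i => ?_) (isClosed_iInter fun i =>
    isClosed_le continuous_const (coord_continuous i))
  have hc : Continuous fun x : Vec d => A.mulVec x i := by
    have : (fun x : Vec d => A.mulVec x i) = fun x : Vec d => ∑ j, A i j * x j := by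
      ext x; simp [Matrix.mulVec, dotProduct]
    rw [this]
    exact continuous_finset_sum _ fun j _ => continuous_const.mul (coord_continuous j)
  exact isClosed_eq hc continuous_const

lemma feas_convex : Convex ℝ (feasibleSet A b) := by
  intro x hx y hy a bb ha hb hab
  refine ⟨?_, ?_⟩
  · rw [WithLp.ofLp_add, WithLp.ofLp_smul, WithLp.ofLp_smul, mulVec_comb, hx.1, hy.1, ← add_smul, hab, one_smul]
  · intro i
    simp only [PiLp.add_apply, PiLp.smul_apply, smul_eq_mul]
    exact add_nonneg (mul_nonneg ha (hx.2 i)) (mul_nonneg hb (hy.2 i))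

lemma argmin_convex (c : Vec d) : Convex ℝ (argminSet (feasibleSet A b) c) := by
  intro x hx y hy a bb ha hb hab
  refine ⟨feas_convex hx.1 hy.1 ha hb hab, fun z hz => ?_⟩
  have h1 := hx.2 z hz
  have h2 := hy.2 z hz
  have hin : ⟪c, a • x + bb • y⟫ = a * ⟪c, x⟫ + bb * ⟪c, y⟫ := by
    rw [inner_add_right, real_inner_smul_right, real_inner_smul_right]
  rw [hin]
  have h3 := mul_le_mul_of_nonneg_left h1 ha
  have h4 := mul_le_mul_of_nonneg_left h2 hb
  have h5 : a * ⟪c, z⟫ + bb * ⟪c, z⟫ = ⟪c, z⟫ := by rw [← add_mul, hab, one_mul]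
  linarith

lemma argmin_nonempty (hne : (feasibleSet A b).Nonempty)
    (hbdd : Bornology.IsBounded (feasibleSet A b)) (c : Vec d) :
    (argminSet (feasibleSet A b) c).Nonempty := by
  have hcpt : IsCompact (feasibleSet A b) :=
    Metric.isCompact_of_isClosed_isBounded feas_closed hbdd
  have hcont : Continuous fun x : Vec d => (⟪c, x⟫ : ℝ) := continuous_const.inner continuous_id
  obtain ⟨x, hx, hmin⟩ := hcpt.exists_isMinOn hne hcont.continuousOn
  exact ⟨x, hx, fun y hy => hmin hy⟩

lemma argmin_eq_face (c' : Vec d) (h : (argminSet (feasibleSet A b) c').Nonempty) :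
    argminSet (feasibleSet A b) c' =
      {x | x ∈ feasibleSet A b ∧
        ∀ i, (∀ y ∈ argminSet (feasibleSet A b) c', y i = 0) → x i = 0} := by
  classical
  set X := feasibleSet A b with hXdef
  set M := argminSet X c' with hMdef
  obtain ⟨x0, hx0⟩ := h
  apply Set.Subset.antisymm
  · intro x hx
    exact ⟨hx.1, fun i hQ => hQ x hx⟩
  · rintro z ⟨hzX, hz⟩
    have hwit : ∀ i : Fin d, ∃ y, y ∈ M ∧ (¬ (∀ w ∈ M, w i = 0) → y i ≠ 0) := by
      intro i
      by_cases hQ : ∀ w ∈ M, w i = 0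
      · exact ⟨x0, hx0, fun h' => absurd hQ h'⟩
      · push_neg at hQ
        obtain ⟨y, hyM, hyi⟩ := hQ
        exact ⟨y, hyM, fun _ => hyi⟩
    choose g hgM hg using hwit
    set T : Finset (Fin d) := Finset.univ.filter (fun i => ¬ ∀ w ∈ M, w i = 0) with hT
    by_cases hTne : T.Nonempty
    · set xb : Vec d := (T.card : ℝ)⁻¹ • ∑ i ∈ T, g i with hxb
      have hcard : (0:ℝ) < T.card := by exact_mod_cast Finset.card_pos.2 hTne
      have hxbM : xb ∈ M := by
        have hrw : xb = ∑ i ∈ T, (T.card : ℝ)⁻¹ • g i := by rw [hxb, Finset.smul_sum]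
        rw [hMdef] at *
        rw [hrw]
        refine (argmin_convex c').sum_mem (fun i _ => by positivity) ?_ (fun i hi => hgM i)
        rw [Finset.sum_const, nsmul_eq_mul]
        field_simp
      have hxbpos : ∀ j ∈ T, 0 < xb j := by
        intro j hj
        have heval : xb j = (T.card : ℝ)⁻¹ * ∑ i ∈ T, g i j := by
          rw [hxb, PiLp.smul_apply, smul_eq_mul, sum_apply']
        rw [heval]
        refine mul_pos (by positivity) ?_
        refine Finset.sum_pos' (fun i _ => (hgM i).1.2 j) ⟨j, hj, ?_⟩
        have hne0 : g j j ≠ 0 := hg j ((Finset.mem_filter.mp hj).2)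
        exact lt_of_le_of_ne ((hgM j).1.2 j) (Ne.symm hne0)
      have hnotT : ∀ j, j ∉ T → ∀ w ∈ M, w j = 0 := by
        intro j hj
        by_contra hc
        exact hj (Finset.mem_filter.mpr ⟨Finset.mem_univ _, hc⟩)
      have hxbzero : ∀ j, j ∉ T → xb j = 0 := fun j hj => hnotT j hj xb hxbM
      have hzzero : ∀ j, j ∉ T → z j = 0 := fun j hj => hz j (hnotT j hj)
      clear_value xb
      set t : ℝ := T.inf' hTne (fun i => xb i / (z i + 1)) with ht
      have htpos : 0 < t := by
        rw [ht, Finset.lt_inf'_iff]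
        intro i hi
        have := hzX.2 i
        exact div_pos (hxbpos i hi) (by linarith)
      clear_value t
      have hwX : xb + t • (xb - z) ∈ X := by
        have hrw2 : xb + t • (xb - z) = (1 + t) • xb + (-t) • z := by module
        refine ⟨?_, ?_⟩
        · rw [hrw2, WithLp.ofLp_add, WithLp.ofLp_smul, WithLp.ofLp_smul, mulVec_comb, hxbM.1.1, hzX.1]
          funext i
          simp only [Pi.add_apply, Pi.smul_apply, smul_eq_mul]
          ring
        · intro i
          by_cases hi : i ∈ T
          · have h1 : t ≤ xb i / (z i + 1) := ht ▸ Finset.inf'_le _ hi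
            have h2 : 0 ≤ z i := hzX.2 i
            have h3 : 0 < xb i := hxbpos i hi
            have h4 : t * (z i + 1) ≤ xb i := (le_div_iff₀ (by linarith)).mp h1
            simp only [PiLp.add_apply, PiLp.smul_apply, PiLp.sub_apply, smul_eq_mul]
            nlinarith
          · simp only [PiLp.add_apply, PiLp.smul_apply, PiLp.sub_apply, smul_eq_mul]
            rw [hxbzero i hi, hzzero i hi]
            simp
      refine ⟨hzX, fun y hy => ?_⟩
      have hopt := hxbM.2 _ hwX
      have hinner : ⟪c', xb + t • (xb - z)⟫ = ⟪c', xb⟫ + t * (⟪c', xb⟫ - ⟪c', z⟫) := by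
        rw [inner_add_right, real_inner_smul_right, inner_sub_right]
      rw [hinner] at hopt
      have hzle : ⟪c', z⟫ ≤ ⟪c', xb⟫ := by nlinarith
      exact le_trans hzle (hxbM.2 y hy)
    · have hall : ∀ i : Fin d, ∀ w ∈ M, w i = 0 := by
        intro i
        by_contra hc
        exact hTne ⟨i, Finset.mem_filter.mpr ⟨Finset.mem_univ _, hc⟩⟩
      have hzx0 : z = x0 := by
        ext i
        rw [hz i (hall i), hall i x0 hx0]
      rw [hzx0]
      exact hx0

end Stmt13Aux


/-- for every c there is ε > 0 such that any c' within distance ε of c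
shares an optimal solution with c. -/
theorem stmt13 {d m : ℕ} (A : Matrix (Fin m) (Fin d) ℝ) (b : Fin m → ℝ)
    (hne : (feasibleSet A b).Nonempty) (hbdd : Bornology.IsBounded (feasibleSet A b)) :
    ∀ c : Vec d, ∃ ε > (0:ℝ), ∀ c' : Vec d, ‖c - c'‖ < ε →
      (argminSet (feasibleSet A b) c ∩ argminSet (feasibleSet A b) c').Nonempty := by
  classical
  intro c
  have hargne : ∀ c' : Vec d, (argminSet (feasibleSet A b) c').Nonempty :=
    Stmt13Aux.argmin_nonempty hne hbdd
  have perS : ∀ S : Finset (Fin d), ∃ e : ℝ, 0 < e ∧ ∀ c' : Vec d, ‖c - c'‖ < e →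
      argminSet (feasibleSet A b) c' = {x | x ∈ feasibleSet A b ∧ ∀ i ∈ S, x i = 0} →
      (argminSet (feasibleSet A b) c ∩ argminSet (feasibleSet A b) c').Nonempty := by
    intro S
    by_cases h1 : ({x | x ∈ feasibleSet A b ∧ ∀ i ∈ S, x i = 0} ∩
        argminSet (feasibleSet A b) c).Nonempty
    · obtain ⟨x, hx1, hx2⟩ := h1
      exact ⟨1, one_pos, fun c' _ hEq => ⟨x, hx2, by rw [hEq]; exact hx1⟩⟩
    · by_cases h2 : ({x | x ∈ feasibleSet A b ∧ ∀ i ∈ S, x i = 0}).Nonempty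
      · obtain ⟨x, hx⟩ := h2
        have hxnot : x ∉ argminSet (feasibleSet A b) c := fun hc => h1 ⟨x, hx, hc⟩
        have hey : ∃ y ∈ feasibleSet A b, ⟪c, y⟫ < ⟪c, x⟫ := by
          by_contra hcon
          push_neg at hcon
          exact hxnot ⟨hx.1, fun y hy => hcon y hy⟩
        obtain ⟨y, hyX, hlt⟩ := hey
        refine ⟨(⟪c, x⟫ - ⟪c, y⟫) / (‖x - y‖ + 1),
          div_pos (sub_pos.2 hlt) (by positivity), ?_⟩
        intro c' hnear hEq
        exfalso
        have hxopt : x ∈ argminSet (feasibleSet A b) c' := by rw [hEq]; exact hx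
        have hle : ⟪c', x⟫ ≤ ⟪c', y⟫ := hxopt.2 y hyX
        have key : ⟪c - c', x - y⟫ = ⟪c, x - y⟫ - ⟪c', x - y⟫ := inner_sub_left _ _ _
        have habs : ⟪c - c', x - y⟫ ≤ ‖c - c'‖ * ‖x - y‖ := real_inner_le_norm _ _
        have h5 : ⟪c, x - y⟫ = ⟪c, x⟫ - ⟪c, y⟫ := inner_sub_right _ _ _
        have h6 : ⟪c', x - y⟫ = ⟪c', x⟫ - ⟪c', y⟫ := inner_sub_right _ _ _
        have hmul : ‖c - c'‖ * (‖x - y‖ + 1) < ⟪c, x⟫ - ⟪c, y⟫ :=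
          (lt_div_iff₀ (by positivity)).mp hnear
        nlinarith [norm_nonneg (x - y), norm_nonneg (c - c')]
      · refine ⟨1, one_pos, fun c' _ hEq => ?_⟩
        obtain ⟨x, hx⟩ := hargne c'
        exact absurd ⟨x, by rw [← hEq]; exact hx⟩ h2
  choose ef hefpos hef using perS
  refine ⟨Finset.univ.inf' Finset.univ_nonempty ef, ?_, ?_⟩
  · rw [gt_iff_lt, Finset.lt_inf'_iff]
    exact fun S _ => hefpos S
  · intro c' hnear
    set S : Finset (Fin d) :=
      Finset.univ.filter (fun i => ∀ y ∈ argminSet (feasibleSet A b) c', y i = 0) with hS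
    have hface := Stmt13Aux.argmin_eq_face c' (hargne c')
    have hEq : argminSet (feasibleSet A b) c' =
        {x | x ∈ feasibleSet A b ∧ ∀ i ∈ S, x i = 0} := by
      rw [hface]
      ext x
      simp only [Set.mem_setOf_eq, hS, Finset.mem_filter, Finset.mem_univ, true_and]
    exact hef S c' (lt_of_lt_of_le hnear (Finset.inf'_le _ (Finset.mem_univ S))) hEq
end
end

section
/- Let r = dim(F₀ ∩ Ker A). For every x ∈ 𝒳 there exist feasible directions δ₁, …, δ_r ∈ FD(x) that form a basis of the subspace F₀ ∩ Ker A; in particular span FD(x) = F₀ ∩ Ker A. -/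
open scoped RealInnerProductSpace

noncomputable section

-- membership in kerA
lemma mem_kerA {d m : ℕ} {A : Matrix (Fin m) (Fin d) ℝ} {v : Vec d} :
    v ∈ kerA A ↔ A.mulVec v = 0 := by
  simp [kerA, LinearMap.mem_ker, Matrix.mulVecLin_apply]

lemma mem_F0 {d m : ℕ} {A : Matrix (Fin m) (Fin d) ℝ} {b : Fin m → ℝ} {x : Vec d}
    (hx : x ∈ feasibleSet A b) : x ∈ F0 (feasibleSet A b) := by
  have hrep : x = ∑ i : Fin d, x i • EuclideanSpace.single i (1:ℝ) := by
    have := (EuclideanSpace.basisFun (Fin d) ℝ).toBasis.sum_repr x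
    simpa [EuclideanSpace.basisFun_repr] using this.symm
  rw [hrep]
  refine Submodule.sum_mem _ fun i _ => ?_
  by_cases h : x i = 0
  · simp [h]
  · exact Submodule.smul_mem _ _ (Submodule.subset_span ⟨i, ⟨x, hx, h⟩, rfl⟩)

lemma F0_coord_s17 {d : ℕ} {X : Set (Vec d)} {v : Vec d} (hv : v ∈ F0 X) {i : Fin d}
    (hi : ¬ ∃ x ∈ X, x i ≠ 0) : v i = 0 := by
  induction hv using Submodule.span_induction with
  | mem w hw =>
      obtain ⟨j, hj, rfl⟩ := hw
      have hij : i ≠ j := fun h => hi (h ▸ hj)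
      simp only [EuclideanSpace.single_apply]
      simp [hij]
  | zero => rfl
  | add w₁ w₂ _ _ h1 h2 => simp [PiLp.add_apply, h1, h2]
  | smul a w _ h => simp [PiLp.smul_apply, h]

lemma FD_subset {d m : ℕ} {A : Matrix (Fin m) (Fin d) ℝ} {b : Fin m → ℝ} {x : Vec d}
    (hx : x ∈ feasibleSet A b) :
    FD (feasibleSet A b) x ⊆ ↑(F0 (feasibleSet A b) ⊓ kerA A) := by
  rintro δ ⟨ε, hε, hy⟩
  have hδ : δ = ε⁻¹ • ((x + ε • δ) - x) := by
    rw [add_sub_cancel_left, smul_smul, inv_mul_cancel₀ hε.ne', one_smul]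
  constructor
  · rw [hδ]
    exact Submodule.smul_mem _ _ (Submodule.sub_mem _ (mem_F0 hy) (mem_F0 hx))
  · rw [SetLike.mem_coe, mem_kerA]
    have h1 : A.mulVec (x + ε • δ) = b := hy.1
    have h2 : A.mulVec x = b := hx.1
    have h3 : A.mulVec (x + ε • δ) = A.mulVec x + ε • A.mulVec δ := by
      rw [Matrix.mulVec_add, Matrix.mulVec_smul]
    rw [h1, h2] at h3
    have h4 : ε • A.mulVec δ = 0 := by
      have := h3.symm
      rwa [add_eq_left] at this
    have := congrArg (fun v => ε⁻¹ • v) h4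
    simpa [smul_smul, inv_mul_cancel₀ hε.ne'] using this

-- interior point
lemma exists_interior {d m : ℕ} (A : Matrix (Fin m) (Fin d) ℝ) (b : Fin m → ℝ)
    (hne : (feasibleSet A b).Nonempty) :
    ∃ z ∈ feasibleSet A b, ∀ i : Fin d, (∃ x ∈ feasibleSet A b, x i ≠ 0) → 0 < z i := by
  classical
  obtain ⟨x0, hx0⟩ := hne
  set X := feasibleSet A b
  set T : Finset (Fin d) := Finset.univ.filter (fun i => ∃ x ∈ X, x i ≠ 0) with hT
  have hw : ∀ i ∈ T, ∃ w ∈ X, 0 < w i := by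
    intro i hi
    obtain ⟨w, hwX, hwi⟩ := (Finset.mem_filter.mp hi).2
    exact ⟨w, hwX, lt_of_le_of_ne (hwX.2 i) (Ne.symm hwi)⟩
  choose w hwX hwpos using hw
  set n : ℝ := (T.card : ℝ) + 1 with hn
  have hnpos : 0 < n := by positivity
  refine ⟨n⁻¹ • (x0 + ∑ i ∈ T.attach, w i i.2), ?_, ?_⟩
  · constructor
    · have : A.mulVec (WithLp.ofLp (n⁻¹ • (x0 + ∑ i ∈ T.attach, w i i.2)))
          = n⁻¹ • (A.mulVec x0 + ∑ i ∈ T.attach, A.mulVec (w i i.2)) := by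
        simp only [WithLp.ofLp_smul, WithLp.ofLp_add, WithLp.ofLp_sum, ← Matrix.mulVecLin_apply, map_smul, map_add, map_sum]
      rw [this]
      have h5 : (∑ i ∈ T.attach, A.mulVec (w i.1 i.2)) = T.card • b := by
        rw [Finset.sum_congr rfl (fun i _ => (hwX i.1 i.2).1)]
        simp
      rw [h5, hx0.1, hn]
      match_scalars
      push_cast
      field_simp
      ring
    · intro i
      have happ : (n⁻¹ • (x0 + ∑ j ∈ T.attach, w j.1 j.2)) i
          = n⁻¹ * (x0 i + ∑ j ∈ T.attach, w j.1 j.2 i) := by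
        have : (∑ j ∈ T.attach, w j.1 j.2) i = ∑ j ∈ T.attach, w j.1 j.2 i := by
          rw [WithLp.ofLp_sum]; exact Finset.sum_apply i T.attach fun j => (w j.1 j.2).ofLp
        simp [PiLp.smul_apply, PiLp.add_apply, this, mul_add]
      rw [happ]
      have h1 : 0 ≤ x0 i := hx0.2 i
      have h2 : 0 ≤ ∑ j ∈ T.attach, w j.1 j.2 i :=
        Finset.sum_nonneg fun j _ => (hwX j.1 j.2).2 i
      positivity
  · intro i hi
    have hiT : i ∈ T := by simp [hT, hi]
    have happ : (n⁻¹ • (x0 + ∑ j ∈ T.attach, w j.1 j.2)) i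
        = n⁻¹ * (x0 i + ∑ j ∈ T.attach, w j.1 j.2 i) := by
      have : (∑ j ∈ T.attach, w j.1 j.2) i = ∑ j ∈ T.attach, w j.1 j.2 i := by
        rw [WithLp.ofLp_sum]; exact Finset.sum_apply i T.attach fun j => (w j.1 j.2).ofLp
      simp [PiLp.smul_apply, PiLp.add_apply, this, mul_add]
    rw [happ]
    have h1 : 0 ≤ x0 i := hx0.2 i
    have h2 : w i hiT i ≤ ∑ j ∈ T.attach, w j.1 j.2 i := by
      refine Finset.single_le_sum (f := fun j : {x // x ∈ T} => w j.1 j.2 i)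
        (fun j _ => (hwX j.1 j.2).2 i) (Finset.mem_attach T ⟨i, hiT⟩)
    have h3 : 0 < w i hiT i := hwpos i hiT
    have : 0 < x0 i + ∑ j ∈ T.attach, w j.1 j.2 i := by linarith
    positivity

lemma mem_FD_of_interior {d m : ℕ} {A : Matrix (Fin m) (Fin d) ℝ} {b : Fin m → ℝ} {z : Vec d}
    (hz : z ∈ feasibleSet A b)
    (hzpos : ∀ i, (∃ x ∈ feasibleSet A b, x i ≠ 0) → 0 < z i)
    {v : Vec d} (hv : v ∈ F0 (feasibleSet A b) ⊓ kerA A) :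
    v ∈ FD (feasibleSet A b) z := by
  classical
  obtain ⟨hvF, hvK⟩ := hv
  have hker : A.mulVec v = 0 := mem_kerA.mp hvK
  by_cases hd : Nonempty (Fin d)
  · set f : Fin d → ℝ := fun i => if v i < 0 then z i / (-(v i)) else 1 with hf
    have hfpos : ∀ i, 0 < f i := by
      intro i
      by_cases h : v i < 0
      · have hi : ∃ x ∈ feasibleSet A b, x i ≠ 0 := by
          by_contra hno
          exact h.ne (F0_coord_s17 hvF hno)
        have hzi := hzpos i hi
        have : (0:ℝ) < -(v i) := by linarith
        simp only [hf, if_pos h]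
        positivity
      · simp [hf, h]
    have hun : (Finset.univ : Finset (Fin d)).Nonempty := Finset.univ_nonempty
    set ε := Finset.univ.inf' hun f with hε'
    have hε : 0 < ε := (Finset.lt_inf'_iff hun).2 fun i _ => hfpos i
    refine ⟨ε, hε, ?_, ?_⟩
    · show A.mulVec (z + ε • v) = b
      rw [Matrix.mulVec_add, Matrix.mulVec_smul, hz.1, hker, smul_zero, add_zero]
    · intro i
      have happ : (z + ε • v) i = z i + ε * v i := by
        simp [PiLp.add_apply, PiLp.smul_apply]
      rw [happ]
      by_cases h : v i < 0
      · have hεf : ε ≤ f i := Finset.inf'_le _ (Finset.mem_univ i)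
        have hfi : f i = z i / (-(v i)) := by simp [hf, h]
        rw [hfi] at hεf
        have hneg : (0:ℝ) < -(v i) := by linarith
        have := (le_div_iff₀ hneg).mp hεf
        nlinarith
      · have h1 : 0 ≤ v i := not_lt.mp h
        have h2 : 0 ≤ z i := hz.2 i
        nlinarith
  · refine ⟨1, one_pos, ?_⟩
    have : z + (1:ℝ) • v = z := PiLp.ext fun i => absurd ⟨i⟩ hd
    rw [this]
    exact hz

/-- for every x ∈ 𝒳 there are r = dim(F₀ ∩ Ker A) feasible directions
from x forming a basis of F₀ ∩ Ker A; in particular span FD(x) = F₀ ∩ Ker A. -/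
theorem stmt17 {d m : ℕ} (A : Matrix (Fin m) (Fin d) ℝ) (b : Fin m → ℝ)
    (hne : (feasibleSet A b).Nonempty) (hbdd : Bornology.IsBounded (feasibleSet A b)) :
    ∀ x ∈ feasibleSet A b,
      ∃ δ : Fin (Module.finrank ℝ ↥(F0 (feasibleSet A b) ⊓ kerA A)) → Vec d,
        (∀ i, δ i ∈ FD (feasibleSet A b) x) ∧
        LinearIndependent ℝ δ ∧
        Submodule.span ℝ (Set.range δ) = F0 (feasibleSet A b) ⊓ kerA A ∧
        Submodule.span ℝ (FD (feasibleSet A b) x) = F0 (feasibleSet A b) ⊓ kerA A := by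
  classical
  intro x hx
  obtain ⟨z, hz, hzpos⟩ := exists_interior A b hne
  have hsub : Submodule.span ℝ (FD (feasibleSet A b) x) ≤ F0 (feasibleSet A b) ⊓ kerA A :=
    Submodule.span_le.mpr (FD_subset hx)
  have hsup : F0 (feasibleSet A b) ⊓ kerA A ≤ Submodule.span ℝ (FD (feasibleSet A b) x) := by
    intro v hv
    obtain ⟨ε, hε, hy⟩ := mem_FD_of_interior hz hzpos hv
    have h1 : z - x ∈ FD (feasibleSet A b) x :=
      ⟨1, one_pos, by rw [one_smul, add_sub_cancel]; exact hz⟩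
    have h2 : (z + ε • v) - x ∈ FD (feasibleSet A b) x :=
      ⟨1, one_pos, by rw [one_smul, add_sub_cancel]; exact hy⟩
    have hrepr : v = ε⁻¹ • ((z + ε • v - x) - (z - x)) := by
      match_scalars <;> field_simp <;> ring
    rw [hrepr]
    exact Submodule.smul_mem _ _ (Submodule.sub_mem _ (Submodule.subset_span h2)
      (Submodule.subset_span h1))
  have hspan : Submodule.span ℝ (FD (feasibleSet A b) x) = F0 (feasibleSet A b) ⊓ kerA A :=
    le_antisymm hsub hsup
  obtain ⟨t, hts, hspt, hli⟩ := exists_linearIndependent ℝ (FD (feasibleSet A b) x)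
  have htfin : t.Finite := hli.setFinite
  haveI : Fintype t := htfin.fintype
  have hcard : Module.finrank ℝ ↥(F0 (feasibleSet A b) ⊓ kerA A) = t.toFinset.card := by
    rw [← hspan, ← hspt]
    exact finrank_span_set_eq_card hli
  have hcard' : Fintype.card t
      = Module.finrank ℝ ↥(F0 (feasibleSet A b) ⊓ kerA A) := by
    rw [hcard, Set.toFinset_card]
  let e := Fintype.equivFinOfCardEq hcard'
  refine ⟨fun i => ((e.symm i : t) : Vec d), fun i => hts (e.symm i).2, ?_, ?_, hspan⟩
  · exact hli.comp e.symm e.symm.injective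
  · have hrange : Set.range (fun i => ((e.symm i : t) : Vec d)) = t := by
      have : (fun i => ((e.symm i : t) : Vec d)) = Subtype.val ∘ e.symm := rfl
      rw [this, Set.range_comp, Equiv.range_eq_univ, Set.image_univ, Subtype.range_coe]
    rw [hrange, hspt, hspan]
end
end
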